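/- arXiv:2404.06445 — 3 statements merged into one kernel-verified Lean document; each statement's English description precedes it below -/
import Mathlib

section
/- Let T be a finite tree with at least 2 vertices, and let G be the graph obtained from T by isomorphic leaf matching. Then G is a minimal bipartite matching covered graph: G is connected, bipartite, has at least 4 vertices, every edge of G lies in a perfect matching of G, and for every edge e of G the graph obtained from G by deleting e is not matching covered. -/
open SimpleGraph

/-- The degree of a vertex `v` in a graph `G`: the number of neighbours of `v`. -/
noncomputable def degN {V : Type*} (G : SimpleGraph V) (v : V) : ℕ :=
  (G.neighborSet v).ncard

/-- A finite simple graph is matching covered if it is connected, has at least 4 vertices,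
and every edge lies in some perfect matching. -/
def MatchingCovered {V : Type*} [Fintype V] (G : SimpleGraph V) : Prop :=
  G.Connected ∧ 4 ≤ Fintype.card V ∧
    ∀ e ∈ G.edgeSet, ∃ M : G.Subgraph, M.IsPerfectMatching ∧ e ∈ M.edgeSet

/-- A matching covered graph is minimal if deleting any edge destroys the property. -/
def MinimalMatchingCovered {V : Type*} [Fintype V] (G : SimpleGraph V) : Prop :=
  MatchingCovered G ∧ ∀ e ∈ G.edgeSet, ¬ MatchingCovered (G.deleteEdges {e})

/-- The graph obtained from a tree `T` by isomorphic leaf matching: two disjoint copies of `T`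
(the `inl` copy and the `inr` copy), together with an edge joining the two copies of each
leaf (degree-1 vertex) of `T`. -/
def leafMatching {V : Type*} (T : SimpleGraph V) : SimpleGraph (V ⊕ V) where
  Adj x y :=
    match x, y with
    | Sum.inl u, Sum.inl v => T.Adj u v
    | Sum.inr u, Sum.inr v => T.Adj u v
    | Sum.inl u, Sum.inr v => u = v ∧ degN T u = 1
    | Sum.inr u, Sum.inl v => u = v ∧ degN T v = 1
  symm := by
    constructor
    rintro (u | u) (v | v) h
    · exact T.adj_symm h
    · exact ⟨h.1.symm, h.2⟩
    · exact ⟨h.1.symm, h.2⟩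
    · exact T.adj_symm h
  loopless := by
    constructor
    rintro (u | u) h
    · exact T.loopless.irrefl u h
    · exact T.loopless.irrefl u h

/-!
Perfect matchings of `leafMatching T` come from matchings of `T` that leave only leaves
uncovered: take the matching in both copies and join each uncovered leaf to its twin. In a
forest such matchings exist even when a set of vertices lying in distinct components must stay
uncovered (peel off a leaf edge and induct); applied to `T` with one leaf prescribed, or to
`T - uv` with `u` and `v` prescribed and then `uv` added, they put every edge into a perfect
matching.

For minimality: if a copy of a tree edge `uv` is deleted, let `S` consist of both copies of
the component of `u` in `T - uv`; `S` has even size and the other copy of `uv` is the only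
remaining edge leaving it, so by parity no perfect matching uses that copy. If the rung at a
leaf `v` with neighbour `p` is deleted, every perfect matching must pair `inl v` with `inl p`,
so the other edge at `inl p` (the rung at `p`, or a copy of an edge `pq`) is in none.
-/

namespace SimpleGraph

variable {V : Type*} {G H : SimpleGraph V}

lemma IsAcyclic.eq_snd_of_adj_of_forall_length_le (hH : H.IsAcyclic) {u v w : V}
    {p : H.Walk u v} (hp : p.IsPath)
    (hmax : ∀ (u' v' : V) (p' : H.Walk u' v'), p'.IsPath → p'.length ≤ p.length)
    (huw : H.Adj u w) : w = p.snd := by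
  refine hH.eq_snd_of_adj_start hp huw (by_contra fun hw => ?_)
  have := hmax _ _ _ (hp.cons (h := huw.symm) hw)
  simp at this

lemma IsAcyclic.exists_leaf_notMem [Finite V] (hH : H.IsAcyclic) {R : Set V}
    (hR : R.Pairwise fun a b => ¬ H.Reachable a b) {a b : V} (hab : H.Adj a b) :
    ∃ ℓ p, ℓ ∉ R ∧ H.Adj ℓ p ∧ ∀ q, H.Adj ℓ q → q = p := by
  have : Nonempty V := ⟨a⟩
  -- both ends of a longest path are leaves, and they cannot both lie in `R`
  obtain ⟨u, v, p, hp, hmax⟩ := Walk.exists_isPath_forall_isPath_length_le_length H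
  have hnil : ¬ p.Nil := Walk.not_nil_iff_lt_length.mpr (hmax _ _ _ (.of_adj hab))
  by_cases hu : u ∈ R
  · have hv : v ∉ R := fun hv => hR hu hv (hp.nil_iff_eq.not.mp hnil) ⟨p⟩
    refine ⟨v, p.reverse.snd, hv, p.reverse.adj_snd (by simpa using hnil), fun q hq =>
      hH.eq_snd_of_adj_of_forall_length_le hp.reverse (by simpa using hmax) hq⟩
  · exact ⟨u, p.snd, hu, p.adj_snd hnil, fun q hq =>
      hH.eq_snd_of_adj_of_forall_length_le hp hmax hq⟩

lemma neighborSet_deleteEdges_of_ne {a b x : V} (ha : x ≠ a) (hb : x ≠ b) :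
    (H.deleteEdges {s(a, b)}).neighborSet x = H.neighborSet x := by
  ext y
  simp [ha, hb]

lemma eq_and_eq_of_adj_of_reachable_deleteEdges {u v x y : V}
    (hx : (H.deleteEdges {s(u, v)}).Reachable u x) (hy : ¬ (H.deleteEdges {s(u, v)}).Reachable u y)
    (hxy : H.Adj x y) : x = u ∧ y = v := by
  have : s(x, y) = s(u, v) := by_contra fun hne =>
    hy (hx.trans (Adj.reachable (deleteEdges_adj.mpr ⟨hxy, hne⟩)))
  rcases Sym2.eq_iff.mp this with h | ⟨-, rfl⟩
  · exact h
  · exact (hy .rfl).elim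

lemma Subgraph.IsMatching.sup_subgraphOfAdj {M : G.Subgraph} (hM : M.IsMatching) {a b : V}
    (hab : G.Adj a b) (ha : a ∉ M.verts) (hb : b ∉ M.verts) :
    (M ⊔ G.subgraphOfAdj hab).IsMatching := by
  refine hM.sup (.subgraphOfAdj hab) ?_
  rw [Set.disjoint_left]
  intro x hx hx'
  rw [support_subgraphOfAdj, Set.mem_insert_iff, Set.mem_singleton_iff] at hx'
  rcases hx' with rfl | rfl
  · exact ha (M.support_subset_verts hx)
  · exact hb (M.support_subset_verts hx)

theorem IsAcyclic.exists_isMatching_of_pairwise_not_reachable [Finite V] (hH : H.IsAcyclic)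
    {R : Set V} (hR : R.Pairwise fun a b => ¬ H.Reachable a b) :
    ∃ M : H.Subgraph, M.IsMatching ∧ Disjoint M.verts R ∧
      ∀ x ∉ M.verts, x ∉ R → (H.neighborSet x).Subsingleton := by
  induction H using WellFoundedLT.induction with
  | _ H ih =>
  by_cases hedge : ∃ a b, H.Adj a b
  swap
  · push Not at hedge
    refine ⟨⊥, fun _ h => h.elim, by simp, fun x _ _ y hy => (hedge x y hy).elim⟩
  obtain ⟨a, b, hab⟩ := hedge
  obtain ⟨ℓ, p, hℓR, hℓp, hleaf⟩ := hH.exists_leaf_notMem hR hab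
  set H' := H.deleteEdges {s(ℓ, p)}
  have hle : H' ≤ H := deleteEdges_le _
  have hlt : H' < H := lt_of_le_of_ne hle fun h => by
    have : H'.Adj ℓ p := h ▸ hℓp
    simp [H'] at this
  obtain ⟨M', hM', hdisj, hcov⟩ := ih H' hlt (hH.anti hle)
    (hR.mono' fun a b h hr => h (hr.mono hle))
  have hℓM' : ℓ ∉ M'.verts := fun hℓ => by
    obtain ⟨w, hw, -⟩ := hM' hℓ
    have hw' : H'.Adj ℓ w := M'.adj_sub hw
    rw [deleteEdges_adj, hleaf w hw'.1] at hw'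
    exact hw'.2 rfl
  have hverts : (M'.map (Hom.ofLE hle)).verts = M'.verts := by simp
  by_cases hp : p ∉ M'.verts ∧ p ∉ R
  · refine ⟨M'.map (Hom.ofLE hle) ⊔ H.subgraphOfAdj hℓp,
      (hM'.map_ofLE hle).sup_subgraphOfAdj hℓp (hverts ▸ hℓM') (hverts ▸ hp.1), ?_, ?_⟩
    · simpa using ⟨hℓR, hp.2, hdisj⟩
    · intro x hx hxR
      obtain ⟨hxℓ, hxp, hx⟩ : x ≠ ℓ ∧ x ≠ p ∧ x ∉ M'.verts := by simpa using hx
      rw [← neighborSet_deleteEdges_of_ne hxℓ hxp]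
      exact hcov x hx hxR
  · refine ⟨M'.map (Hom.ofLE hle), hM'.map_ofLE hle, hverts ▸ hdisj, fun x hx hxR => ?_⟩
    rw [hverts] at hx
    by_cases hxℓ : x = ℓ
    · subst hxℓ
      exact fun y hy z hz => (hleaf y hy).trans (hleaf z hz).symm
    have hxp : x ≠ p := by rintro rfl; exact hp ⟨hx, hxR⟩
    rw [← neighborSet_deleteEdges_of_ne hxℓ hxp]
    exact hcov x hx hxR

lemma IsAcyclic.exists_isMatching_notMem_verts [Finite V] (hH : H.IsAcyclic) (r : V) :
    ∃ M : H.Subgraph, M.IsMatching ∧ r ∉ M.verts ∧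
      ∀ x ∉ M.verts, x ≠ r → (H.neighborSet x).Subsingleton := by
  obtain ⟨M, hM, hdisj, hcov⟩ :=
    hH.exists_isMatching_of_pairwise_not_reachable (R := {r}) (Set.pairwise_singleton _ _)
  exact ⟨M, hM, Set.disjoint_singleton_right.mp hdisj, hcov⟩

lemma IsAcyclic.exists_isMatching_adj [Finite V] (hH : H.IsAcyclic) {u v : V} (huv : H.Adj u v) :
    ∃ M : H.Subgraph, M.IsMatching ∧ M.Adj u v ∧
      ∀ x ∉ M.verts, (H.neighborSet x).Subsingleton := by
  set H' := H.deleteEdges {s(u, v)}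
  have hle : H' ≤ H := deleteEdges_le _
  have hbridge : ¬ H'.Reachable u v :=
    isBridge_iff.mp (isAcyclic_iff_forall_adj_isBridge.mp hH huv)
  obtain ⟨M', hM', hdisj, hcov⟩ := (hH.anti hle).exists_isMatching_of_pairwise_not_reachable
    (R := {u, v}) (Set.pairwise_pair.mpr fun _ => ⟨hbridge, fun h => hbridge h.symm⟩)
  have hverts : (M'.map (Hom.ofLE hle)).verts = M'.verts := by simp
  obtain ⟨hu, hv⟩ : u ∉ M'.verts ∧ v ∉ M'.verts := by
    simpa using hdisj.symm
  refine ⟨M'.map (Hom.ofLE hle) ⊔ H.subgraphOfAdj huv,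
    (hM'.map_ofLE hle).sup_subgraphOfAdj huv (hverts ▸ hu) (hverts ▸ hv),
    Or.inr (subgraphOfAdj_adj_self huv), fun x hx => ?_⟩
  obtain ⟨hxu, hxv, hx⟩ : x ≠ u ∧ x ≠ v ∧ x ∉ M'.verts := by simpa using hx
  rw [← neighborSet_deleteEdges_of_ne hxu hxv]
  exact hcov x hx (by simp [hxu, hxv])

lemma Subgraph.IsPerfectMatching.odd_card_of_forall_adj_notMem_eq {M : G.Subgraph}
    (hM : M.IsPerfectMatching) {S : Finset V} {a b : V} (ha : a ∈ S) (hb : b ∉ S)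
    (hab : M.Adj a b) (hS : ∀ x ∈ S, ∀ y ∉ S, M.Adj x y → x = a) : Odd S.card := by
  classical
  have hmatch : (M.induce ↑(S.erase a)).IsMatching := by
    intro x hx
    obtain ⟨hxa, hxS⟩ := Finset.mem_erase.mp hx
    obtain ⟨y, hxy, huniq⟩ := hM.1 (hM.2 x)
    have hyS : y ∈ S := by_contra fun hyS => hxa (hS x hxS y hyS hxy)
    have hya : y ≠ a := by
      rintro rfl
      exact hb (hM.1.eq_of_adj_left hab hxy.symm ▸ hxS)
    exact ⟨y, ⟨hx, Finset.mem_erase.mpr ⟨hya, hyS⟩, hxy⟩, fun z hz => huniq z hz.2.2⟩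
  have : Fintype (M.induce ↑(S.erase a)).verts := (S.erase a).finite_toSet.fintype
  rw [← Finset.card_erase_add_one ha]
  simpa [Finset.sdiff_singleton_eq_erase] using hmatch.even_card.add_one

lemma Subgraph.IsPerfectMatching.adj_of_neighborSet_subset {M : G.Subgraph}
    (hM : M.IsPerfectMatching) {a b : V} (h : G.neighborSet a ⊆ {b}) : M.Adj a b := by
  obtain ⟨w, hw, -⟩ := hM.1 (hM.2 a)
  rwa [← Set.mem_singleton_iff.mp (h (M.adj_sub hw))]

end SimpleGraph

section LeafMatching

variable {V : Type*} {T : SimpleGraph V}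

@[simp] lemma leafMatching_adj_inl_inl {u v : V} :
    (leafMatching T).Adj (.inl u) (.inl v) ↔ T.Adj u v := .rfl

@[simp] lemma leafMatching_adj_inr_inr {u v : V} :
    (leafMatching T).Adj (.inr u) (.inr v) ↔ T.Adj u v := .rfl

@[simp] lemma leafMatching_adj_inl_inr {u v : V} :
    (leafMatching T).Adj (.inl u) (.inr v) ↔ u = v ∧ degN T u = 1 := .rfl

lemma degN_eq_one_of_subsingleton [Nontrivial V] (hT : T.Preconnected) {x : V}
    (hx : (T.neighborSet x).Subsingleton) : degN T x = 1 := by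
  obtain ⟨y, hy⟩ := hT.exists_adj_of_nontrivial x
  rw [degN, hx.eq_singleton_of_mem hy, Set.ncard_singleton]

lemma leafMatching_colorable_two (hT : T.Colorable 2) : (leafMatching T).Colorable 2 := by
  obtain ⟨c⟩ := hT
  have hrev : ∀ i : Fin 2, i ≠ i.rev := by decide
  refine ⟨Coloring.mk (Sum.elim c (Fin.rev ∘ c)) ?_⟩
  rintro (u | u) (v | v) h
  · exact c.valid h
  · obtain ⟨rfl, -⟩ := h
    exact hrev _
  · obtain ⟨rfl, -⟩ := h
    exact (hrev _).symm
  · simpa using c.valid h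

lemma leafMatching_connected (hT : T.Connected) {ℓ : V} (hℓ : degN T ℓ = 1) :
    (leafMatching T).Connected := by
  have hl (u v : V) : (leafMatching T).Reachable (.inl u) (.inl v) :=
    (hT u v).map (⟨Sum.inl, id⟩ : T →g leafMatching T)
  have hr (u v : V) : (leafMatching T).Reachable (.inr u) (.inr v) :=
    (hT u v).map (⟨Sum.inr, id⟩ : T →g leafMatching T)
  have hrung : (leafMatching T).Reachable (.inl ℓ) (.inr ℓ) := Adj.reachable ⟨rfl, hℓ⟩
  have : Nonempty (V ⊕ V) := ⟨.inl ℓ⟩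
  refine .mk ?_
  rintro (u | u) (v | v)
  · exact hl u v
  · exact (hl u ℓ).trans (hrung.trans (hr ℓ v))
  · exact (hr u ℓ).trans (hrung.symm.trans (hl ℓ v))
  · exact hr u v

def liftMatching (M : T.Subgraph) (hcov : ∀ x ∉ M.verts, degN T x = 1) :
    (leafMatching T).Subgraph where
  verts := Set.univ
  Adj
    | .inl u, .inl v => M.Adj u v
    | .inr u, .inr v => M.Adj u v
    | .inl u, .inr v => u = v ∧ u ∉ M.verts
    | .inr u, .inl v => u = v ∧ u ∉ M.verts
  adj_sub := by
    rintro (u | u) (v | v) h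
    · exact M.adj_sub h
    · exact ⟨h.1, hcov u h.2⟩
    · exact ⟨h.1, h.1 ▸ hcov u h.2⟩
    · exact M.adj_sub h
  edge_vert _ := trivial
  symm := by
    constructor
    rintro (u | u) (v | v) h
    · exact M.adj_symm h
    · exact ⟨h.1.symm, h.1 ▸ h.2⟩
    · exact ⟨h.1.symm, h.1 ▸ h.2⟩
    · exact M.adj_symm h

lemma isPerfectMatching_liftMatching {M : T.Subgraph} (hM : M.IsMatching)
    (hcov : ∀ x ∉ M.verts, degN T x = 1) : (liftMatching M hcov).IsPerfectMatching := by
  rw [Subgraph.isPerfectMatching_iff]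
  rintro (u | u)
  · by_cases hu : u ∈ M.verts
    · obtain ⟨w, hw, huniq⟩ := hM hu
      refine ⟨.inl w, hw, ?_⟩
      rintro (y | y) hy
      · exact congrArg _ (huniq y hy)
      · exact (hy.2 hu).elim
    · refine ⟨.inr u, ⟨rfl, hu⟩, ?_⟩
      rintro (y | y) hy
      · exact (hu (M.edge_vert hy)).elim
      · exact congrArg _ hy.1.symm
  · by_cases hu : u ∈ M.verts
    · obtain ⟨w, hw, huniq⟩ := hM hu
      refine ⟨.inr w, hw, ?_⟩
      rintro (y | y) hy
      · exact (hy.2 hu).elim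
      · exact congrArg _ (huniq y hy)
    · refine ⟨.inl u, ⟨rfl, hu⟩, ?_⟩
      rintro (y | y) hy
      · exact congrArg _ hy.1.symm
      · exact (hu (M.edge_vert hy)).elim

lemma exists_isPerfectMatching_leafMatching_of_adj [Finite V] [Nontrivial V] (hT : T.IsTree)
    {u v : V} (huv : T.Adj u v) : ∃ N : (leafMatching T).Subgraph,
      N.IsPerfectMatching ∧ N.Adj (.inl u) (.inl v) ∧ N.Adj (.inr u) (.inr v) := by
  obtain ⟨M, hM, hMuv, hcov⟩ := hT.isAcyclic.exists_isMatching_adj huv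
  have hcov' (x : V) (hx : x ∉ M.verts) : degN T x = 1 :=
    degN_eq_one_of_subsingleton hT.connected.preconnected (hcov x hx)
  exact ⟨liftMatching M hcov', isPerfectMatching_liftMatching hM hcov', hMuv, hMuv⟩

lemma exists_isPerfectMatching_leafMatching_rung [Finite V] [Nontrivial V] (hT : T.IsTree)
    {u : V} (hu : degN T u = 1) :
    ∃ N : (leafMatching T).Subgraph, N.IsPerfectMatching ∧ N.Adj (.inl u) (.inr u) := by
  obtain ⟨M, hM, huM, hcov⟩ := hT.isAcyclic.exists_isMatching_notMem_verts u
  have hcov' (x : V) (hx : x ∉ M.verts) : degN T x = 1 := by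
    obtain rfl | hxu := eq_or_ne x u
    · exact hu
    · exact degN_eq_one_of_subsingleton hT.connected.preconnected (hcov x hx hxu)
  exact ⟨liftMatching M hcov', isPerfectMatching_liftMatching hM hcov', rfl, huM⟩

lemma leafMatching_matchingCovered [Fintype V] (hT : T.IsTree) (hcard : 2 ≤ Fintype.card V) :
    MatchingCovered (leafMatching T) := by
  have : Nontrivial V := Fintype.one_lt_card_iff_nontrivial.mp hcard
  obtain ⟨b, hab⟩ := hT.connected.preconnected.exists_adj_of_nontrivial (Classical.arbitrary V)
  obtain ⟨ℓ, p, -, -, hℓ⟩ := hT.isAcyclic.exists_leaf_notMem (R := ∅) (by simp) hab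
  refine ⟨leafMatching_connected hT.connected (degN_eq_one_of_subsingleton
    hT.connected.preconnected fun x hx y hy => (hℓ x hx).trans (hℓ y hy).symm),
    by rw [Fintype.card_sum]; omega, ?_⟩
  rintro ⟨x, y⟩ he
  rcases x with u | u <;> rcases y with v | v
  · obtain ⟨N, hN, h, -⟩ := exists_isPerfectMatching_leafMatching_of_adj hT he
    exact ⟨N, hN, h⟩
  · obtain ⟨rfl, hu⟩ := he
    obtain ⟨N, hN, h⟩ := exists_isPerfectMatching_leafMatching_rung hT hu
    exact ⟨N, hN, h⟩
  · obtain ⟨rfl, hu⟩ := he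
    obtain ⟨N, hN, h⟩ := exists_isPerfectMatching_leafMatching_rung hT hu
    exact ⟨N, hN, h.symm⟩
  · obtain ⟨N, hN, -, h⟩ := exists_isPerfectMatching_leafMatching_of_adj hT he
    exact ⟨N, hN, h⟩

lemma leafMatching_adj_of_mem_disjSum {A : Finset V} {u v : V}
    (hA : ∀ x ∈ A, ∀ y ∉ A, T.Adj x y → x = u ∧ y = v) {x y : V ⊕ V}
    (hx : x ∈ A.disjSum A) (hy : y ∉ A.disjSum A) (hxy : (leafMatching T).Adj x y) :
    (x = .inl u ∧ y = .inl v) ∨ (x = .inr u ∧ y = .inr v) := by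
  rcases x with x | x <;> rcases y with y | y <;>
    simp only [Finset.inl_mem_disjSum, Finset.inr_mem_disjSum] at hx hy
  · obtain ⟨rfl, rfl⟩ := hA x hx y hy hxy
    exact .inl ⟨rfl, rfl⟩
  · exact (hy (hxy.1 ▸ hx)).elim
  · exact (hy (hxy.1 ▸ hx)).elim
  · obtain ⟨rfl, rfl⟩ := hA x hx y hy hxy
    exact .inr ⟨rfl, rfl⟩

lemma adj_inl_iff_adj_inr_of_isPerfectMatching [Fintype V] (hT : T.IsAcyclic) {u v : V}
    (huv : T.Adj u v) {K : SimpleGraph (V ⊕ V)} (hK : K ≤ leafMatching T) {N : K.Subgraph}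
    (hN : N.IsPerfectMatching) : N.Adj (.inl u) (.inl v) ↔ N.Adj (.inr u) (.inr v) := by
  classical
  set A := Finset.univ.filter ((T.deleteEdges {s(u, v)}).Reachable u)
  have hu : u ∈ A := by simp [A]
  have hv : v ∉ A := by
    simpa [A] using isBridge_iff.mp (isAcyclic_iff_forall_adj_isBridge.mp hT huv)
  have hcross {x y : V ⊕ V} (hx : x ∈ A.disjSum A) (hy : y ∉ A.disjSum A) (hxy : N.Adj x y) :=
    leafMatching_adj_of_mem_disjSum (fun x hx y hy hxy =>
      eq_and_eq_of_adj_of_reachable_deleteEdges (by simpa [A] using hx) (by simpa [A] using hy)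
        hxy) hx hy (hK (N.adj_sub hxy))
  have heven : ¬ Odd (A.disjSum A).card := by simp [Finset.card_disjSum]
  constructor
  · intro h
    by_contra h'
    refine heven (hN.odd_card_of_forall_adj_notMem_eq (by simpa) (by simpa) h
      fun x hx y hy hxy => ?_)
    exact ((hcross hx hy hxy).resolve_right fun ⟨hxu, hyv⟩ => h' (hxu ▸ hyv ▸ hxy)).1
  · intro h
    by_contra h'
    refine heven (hN.odd_card_of_forall_adj_notMem_eq (by simpa) (by simpa) h
      fun x hx y hy hxy => ?_)
    exact ((hcross hx hy hxy).resolve_left fun ⟨hxu, hyv⟩ => h' (hxu ▸ hyv ▸ hxy)).1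

lemma leafMatching_not_matchingCovered_deleteEdges_rung [Fintype V] {v : V}
    (hv : degN T v = 1) :
    ¬ MatchingCovered ((leafMatching T).deleteEdges {s(.inl v, .inr v)}) := by
  rintro ⟨-, -, hall⟩
  obtain ⟨p, hp⟩ := Set.ncard_eq_one.mp hv
  have hvp : T.Adj v p := show p ∈ T.neighborSet v by simp [hp]
  obtain ⟨y, hyv, hpy⟩ : ∃ y, y ≠ .inl v ∧
      ((leafMatching T).deleteEdges {s(.inl v, .inr v)}).Adj (.inl p) y := by
    by_cases hp1 : degN T p = 1
    · exact ⟨.inr p, by simp, by simpa using ⟨hp1, hvp.ne'⟩⟩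
    · obtain ⟨q, hpq, hqv⟩ : ∃ q, T.Adj p q ∧ q ≠ v := by
        by_contra! h
        refine hp1 (Set.ncard_eq_one.mpr ⟨v, ?_⟩)
        exact Set.eq_singleton_iff_unique_mem.mpr ⟨hvp.symm, h⟩
      exact ⟨.inl q, by simpa using hqv, by simpa using hpq⟩
  obtain ⟨N, hN, hpyN⟩ := hall s(.inl p, y) hpy
  have hvpN : N.Adj (.inl v) (.inl p) := hN.adj_of_neighborSet_subset <| by
    rintro (w | w) hw
    · have : w ∈ T.neighborSet v := by simpa using hw
      simpa [hp] using this
    · rw [mem_neighborSet, deleteEdges_adj] at hw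
      obtain ⟨⟨rfl, -⟩, hne⟩ := hw
      exact (hne rfl).elim
  exact hyv (hN.1.eq_of_adj_left (Subgraph.mem_edgeSet.mp hpyN) hvpN.symm)

lemma leafMatching_not_matchingCovered_deleteEdges [Fintype V] (hT : T.IsAcyclic)
    {e : Sym2 (V ⊕ V)} (he : e ∈ (leafMatching T).edgeSet) :
    ¬ MatchingCovered ((leafMatching T).deleteEdges {e}) := by
  intro hmc
  induction e using Sym2.ind with | _ x y => ?_
  rcases x with u | u <;> rcases y with v | v
  · obtain ⟨N, hN, huvN⟩ := hmc.2.2 s(.inr u, .inr v) (by simpa using he)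
    have := (adj_inl_iff_adj_inr_of_isPerfectMatching hT he (deleteEdges_le _) hN).mpr huvN
    simpa using N.adj_sub this
  · obtain ⟨rfl, hu⟩ := he
    exact leafMatching_not_matchingCovered_deleteEdges_rung hu hmc
  · obtain ⟨rfl, hu⟩ := he
    exact leafMatching_not_matchingCovered_deleteEdges_rung hu (Sym2.eq_swap ▸ hmc)
  · obtain ⟨N, hN, huvN⟩ := hmc.2.2 s(.inl u, .inl v) (by simpa using he)
    have := (adj_inl_iff_adj_inr_of_isPerfectMatching hT he (deleteEdges_le _) hN).mp huvN
    simpa using N.adj_sub this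

end LeafMatching

/-- The graph obtained from a nontrivial finite tree by isomorphic leaf matching is a
minimal bipartite matching covered graph. -/
theorem stmt5 {V : Type*} [Fintype V] (T : SimpleGraph V)
    (hT : T.IsTree) (hcard : 2 ≤ Fintype.card V) :
    (leafMatching T).Colorable 2 ∧ MinimalMatchingCovered (leafMatching T) :=
  ⟨leafMatching_colorable_two hT.isBipartite, leafMatching_matchingCovered hT hcard,
    fun _ he => leafMatching_not_matchingCovered_deleteEdges hT.isAcyclic he⟩
end

section
/- Let k ≥ 1 and let G be a bipartite k-extendable graph. Then G is essentially 2k-edge-connected: for every set W of vertices with |W| ≥ 2 and |V(G) ∖ W| ≥ 2, the number of edges of G with exactly one endpoint in W is at least 2k. -/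
open SimpleGraph

/-- A matching of `G` given as a set of edges of `G`, no two of which share an endpoint. -/
def IsMatchingSet {V : Type*} (G : SimpleGraph V) (F : Set (Sym2 V)) : Prop :=
  F ⊆ G.edgeSet ∧ ∀ e₁ ∈ F, ∀ e₂ ∈ F, e₁ ≠ e₂ → ∀ u ∈ e₁, u ∉ e₂

/-- `G` is `k`-extendable: connected, of order at least `2k+2`, has a matching of `k` edges,
and every matching of `k` edges is contained in a perfect matching of `G`. -/
def KExtendable {V : Type*} [Fintype V] (G : SimpleGraph V) (k : ℕ) : Prop :=
  G.Connected ∧ 2 * k + 2 ≤ Fintype.card V ∧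
    (∃ F : Set (Sym2 V), IsMatchingSet G F ∧ F.ncard = k) ∧
    ∀ F : Set (Sym2 V), IsMatchingSet G F → F.ncard = k →
      ∃ M : G.Subgraph, M.IsPerfectMatching ∧ F ⊆ M.edgeSet

/-- The edge cut determined by a set `W` of vertices:
all edges of `G` with exactly one endpoint in `W`. -/
def edgeCut {V : Type*} (G : SimpleGraph V) (W : Set V) : Set (Sym2 V) :=
  {e | e ∈ G.edgeSet ∧ ∃ u v, e = s(u, v) ∧ u ∈ W ∧ v ∉ W}


namespace Stmt17

variable {V : Type*}

def vtxs (F : Set (Sym2 V)) : Set V := {v | ∃ e ∈ F, v ∈ e}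

def NbS (G : SimpleGraph V) (S : Set V) : Set V := {v | ∃ s ∈ S, G.Adj s v}

def fside (col : V → Bool) : Set V := {v | col v = false}
def tside (col : V → Bool) : Set V := {v | col v = true}

def Proper (G : SimpleGraph V) (col : V → Bool) : Prop :=
  ∀ ⦃u v⦄, G.Adj u v → col u ≠ col v

lemma exists_col {G : SimpleGraph V} (hbip : G.Colorable 2) :
    ∃ col : V → Bool, Proper G col := by
  obtain ⟨C⟩ := hbip
  refine ⟨fun v => decide (C v = 1), fun u v h hc => C.valid h ?_⟩
  simp only [decide_eq_decide] at hc
  have h2 : ∀ x : Fin 2, x = 0 ∨ x = 1 := by decide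
  rcases h2 (C u) with hu | hu <;> rcases h2 (C v) with hv | hv <;> simp_all

lemma partner_exists {G : SimpleGraph V} {M : G.Subgraph} (hM : M.IsPerfectMatching) :
    ∃ f : V → V, (∀ v, M.Adj v (f v)) ∧ ∀ v w, M.Adj v w → w = f v := by
  have h : ∀ v, ∃! w, M.Adj v w := fun v => hM.1 (hM.2 v)
  exact ⟨fun v => (h v).choose, fun v => (h v).choose_spec.1,
    fun v w hw => (h v).choose_spec.2 w hw⟩

lemma partner_facts {G : SimpleGraph V} {M : G.Subgraph} {f : V → V}
    (h1 : ∀ v, M.Adj v (f v)) (h2 : ∀ v w, M.Adj v w → w = f v) :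
    (∀ v, G.Adj v (f v)) ∧ (∀ v, f (f v) = v) ∧
      (∀ e ∈ M.edgeSet, ∀ v ∈ e, e = s(v, f v)) := by
  refine ⟨fun v => (h1 v).adj_sub, fun v => (h2 (f v) v (h1 v).symm).symm, ?_⟩
  intro e he v hv
  induction e using Sym2.ind with
  | _ a b =>
    rw [Subgraph.mem_edgeSet] at he
    rcases Sym2.mem_iff.mp hv with rfl | rfl
    · rw [← h2 v b he]
    · rw [Sym2.eq_swap, ← h2 v a he.symm]

lemma sym2_ncard_le (e : Sym2 V) : {v | v ∈ e}.ncard ≤ 2 := by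
  induction e using Sym2.ind with
  | _ a b =>
    have h : {v | v ∈ s(a, b)} = {a, b} := by
      ext v; simp [Sym2.mem_iff]
    rw [h]
    exact (Set.ncard_insert_le a {b}).trans (by simp)

lemma ncard_le_two_mul [Fintype V] {P : Set V} {Z : Set (Sym2 V)}
    (h : ∀ v ∈ P, ∃ e ∈ Z, v ∈ e) : P.ncard ≤ 2 * Z.ncard := by
  classical
  have hsub : P.toFinset ⊆ Z.toFinset.biUnion (fun e => {v | v ∈ e}.toFinset) := by
    intro v hv
    rw [Set.mem_toFinset] at hv
    obtain ⟨e, he, hve⟩ := h v hv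
    exact Finset.mem_biUnion.mpr ⟨e, Set.mem_toFinset.mpr he, Set.mem_toFinset.mpr hve⟩
  calc P.ncard = P.toFinset.card := Set.ncard_eq_toFinset_card' P
    _ ≤ (Z.toFinset.biUnion (fun e => {v | v ∈ e}.toFinset)).card := Finset.card_le_card hsub
    _ ≤ ∑ e ∈ Z.toFinset, ({v | v ∈ e}.toFinset).card := Finset.card_biUnion_le
    _ ≤ ∑ _e ∈ Z.toFinset, 2 := by
        refine Finset.sum_le_sum fun e _ => ?_
        rw [← Set.ncard_eq_toFinset_card']
        exact sym2_ncard_le e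
    _ = 2 * Z.ncard := by
        rw [Finset.sum_const, smul_eq_mul, Set.ncard_eq_toFinset_card' Z, mul_comm]

/-- Pad a partial matching `F₀` with edges of a perfect matching `M` to reach size `k`. -/
lemma pad_matching [Fintype V] {G : SimpleGraph V} {M : G.Subgraph}
    (hM : M.IsPerfectMatching) {f : V → V}
    (h1 : ∀ v, M.Adj v (f v)) (h2 : ∀ v w, M.Adj v w → w = f v)
    {F₀ E' : Set (Sym2 V)} (hF₀ : IsMatchingSet G F₀) (hE' : E' ⊆ M.edgeSet)
    (hcov : ∀ e ∈ M.edgeSet, (∃ v ∈ e, v ∈ vtxs F₀) → e ∈ E')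
    {k : ℕ} (hl : F₀.ncard ≤ k)
    (hcnt : 2 * E'.ncard + 2 * (k - F₀.ncard) ≤ Fintype.card V) :
    ∃ F : Set (Sym2 V), IsMatchingSet G F ∧ F₀ ⊆ F ∧ F.ncard = k := by
  classical
  obtain ⟨-, -, hme⟩ := partner_facts h1 h2
  set D : Set (Sym2 V) := M.edgeSet \ E' with hD
  -- D is large
  have hPD : ∀ v ∈ (Set.univ : Set V), ∃ e ∈ D ∪ E', v ∈ e := by
    intro v _
    refine ⟨s(v, f v), ?_, Sym2.mem_mk_left v (f v)⟩
    have he : s(v, f v) ∈ M.edgeSet := Subgraph.mem_edgeSet.mpr (h1 v)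
    by_cases hvE : s(v, f v) ∈ E'
    · exact Or.inr hvE
    · exact Or.inl ⟨he, hvE⟩
  have hbig : Fintype.card V ≤ 2 * D.ncard + 2 * E'.ncard := by
    have h1' := ncard_le_two_mul hPD
    have h2' : (Set.univ : Set V).ncard = Fintype.card V := by
      rw [Set.ncard_univ, Nat.card_eq_fintype_card]
    have h3' : (D ∪ E').ncard ≤ D.ncard + E'.ncard := Set.ncard_union_le D E'
    omega
  have hDcard : k - F₀.ncard ≤ D.ncard := by omega
  obtain ⟨P, hPD', hPcard⟩ := Set.exists_subset_card_eq hDcard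
  -- properties of edges in D
  have hDnotouch : ∀ e ∈ D, ∀ v ∈ e, v ∉ vtxs F₀ := by
    intro e he v hv hvF
    exact he.2 (hcov e he.1 ⟨v, hv, hvF⟩)
  have hPM' : ∀ e ∈ P, e ∈ M.edgeSet := fun e he => (hPD' he).1
  have hdisj : Disjoint F₀ P := by
    rw [Set.disjoint_left]
    intro e heF heP
    induction e using Sym2.ind with
    | _ a b =>
      exact hDnotouch _ (hPD' heP) a (Sym2.mem_mk_left a b) ⟨_, heF, Sym2.mem_mk_left a b⟩
  refine ⟨F₀ ∪ P, ⟨?_, ?_⟩, Set.subset_union_left, ?_⟩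
  · intro e he
    rcases he with he | he
    · exact hF₀.1 he
    · exact M.edgeSet_subset (hPM' e he)
  · intro e₁ he₁ e₂ he₂ hne u hu₁ hu₂
    rcases he₁ with he₁ | he₁ <;> rcases he₂ with he₂ | he₂
    · exact hF₀.2 e₁ he₁ e₂ he₂ hne u hu₁ hu₂
    · exact hDnotouch e₂ (hPD' he₂) u hu₂ ⟨e₁, he₁, hu₁⟩
    · exact hDnotouch e₁ (hPD' he₁) u hu₁ ⟨e₂, he₂, hu₂⟩
    · -- two distinct M-edges share a vertex: impossible
      have h₁ := hme e₁ (hPM' e₁ he₁) u hu₁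
      have h₂ := hme e₂ (hPM' e₂ he₂) u hu₂
      exact hne (h₁.trans h₂.symm)
  · rw [Set.ncard_union_eq hdisj (Set.toFinite _) (Set.toFinite _), hPcard]
    omega

lemma nbs_subset_tside {G : SimpleGraph V} {col : V → Bool} (hcol : Proper G col)
    {S : Set V} (hS : S ⊆ fside col) : NbS G S ⊆ tside col := by
  rintro v ⟨s, hs, hadj⟩
  have h1 : col s = false := hS hs
  have h2 := hcol hadj
  simp only [tside, Set.mem_setOf_eq]
  rw [h1] at h2
  exact (Bool.not_eq_false _).mp (Ne.symm h2)

lemma fside_compl (col : V → Bool) : fside col = (tside col)ᶜ := by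
  ext v; simp [fside, tside]

lemma sides_card [Fintype V] (col : V → Bool) :
    (tside col).ncard + (fside col).ncard = Fintype.card V := by
  rw [fside_compl, ← Nat.card_eq_fintype_card]
  exact Set.ncard_add_ncard_compl _

lemma proper_flip {G : SimpleGraph V} {col : V → Bool} (hcol : Proper G col) :
    Proper G (fun v => !col v) := by
  intro u v h hc
  exact hcol h (by simpa using hc)

lemma fside_flip (col : V → Bool) : fside (fun v => !col v) = tside col := by
  ext v; simp [fside, tside]

lemma tside_flip (col : V → Bool) : tside (fun v => !col v) = fside col := by
  ext v; simp [fside, tside]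

/-- the two sides of a bipartition have equal size, given a perfect matching -/
lemma sides_eq [Fintype V] {G : SimpleGraph V} {M : G.Subgraph} (hM : M.IsPerfectMatching)
    {col : V → Bool} (hcol : Proper G col) :
    (tside col).ncard = (fside col).ncard := by
  obtain ⟨f, h1, h2⟩ := partner_exists hM
  obtain ⟨hadj, hinv, -⟩ := partner_facts h1 h2
  have hmaps : ∀ c : Bool, ∀ v ∈ {v | col v = c}, f v ∈ {v | col (v : V) ≠ c} := by
    intro c v hv
    simp only [Set.mem_setOf_eq] at hv ⊢
    rw [← hv]
    exact fun hc => hcol (hadj v) hc.symm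
  have hinj : Function.Injective f := by
    intro a b hab
    rw [← hinv a, hab, hinv b]
  have hle : ∀ c : Bool, {v | col v = c}.ncard ≤ {v | col v ≠ c}.ncard := by
    intro c
    exact Set.ncard_le_ncard_of_injOn f (hmaps c) hinj.injOn (Set.toFinite _)
  have e1 : {v | col v ≠ true} = fside col := by ext v; simp [fside]
  have e2 : {v | col v ≠ false} = tside col := by ext v; simp [tside]
  have g1 := hle true
  have g2 := hle false
  rw [e1] at g1
  rw [e2] at g2
  exact le_antisymm (g1 : (tside col).ncard ≤ _) g2

lemma pigeon [Fintype V] {j : ℕ} {S X T' : Set V} (g : V → V)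
    (hinv : ∀ v, g (g v) = v) (hgX : ∀ s ∈ S, g s ∈ X) (hT'X : T' ⊆ X)
    (hT'S : ∀ t ∈ T', g t ∉ S) (hX : X.ncard = S.ncard + j)
    (hT' : T'.ncard = j + 1) (hSne : S.Nonempty) : False := by
  have hmaps : ∀ s ∈ S, g s ∈ X \ T' := by
    intro s hs
    refine ⟨hgX s hs, fun ht => ?_⟩
    have h := hT'S _ ht
    rw [hinv s] at h
    exact h hs
  have hinj : Set.InjOn g S := fun a _ b _ hab => by rw [← hinv a, hab, hinv b]
  have h1 : S.ncard ≤ (X \ T').ncard :=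
    Set.ncard_le_ncard_of_injOn g hmaps hinj (Set.toFinite _)
  have h2 : (X \ T').ncard = X.ncard - T'.ncard := Set.ncard_diff hT'X (Set.toFinite _)
  have h3 : 0 < S.ncard := (Set.ncard_pos (Set.toFinite _)).mpr hSne
  omega

lemma matching_image {G : SimpleGraph V} {col : V → Bool} (hcol : Proper G col)
    {A₀ : Set V} {m : V → V}
    (hadj : ∀ a ∈ A₀, G.Adj a (m a))
    (hcolA : ∀ a ∈ A₀, col a = true) (hcolm : ∀ a ∈ A₀, col (m a) = false)
    (hinj : Set.InjOn m A₀) :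
    IsMatchingSet G ((fun a => s(a, m a)) '' A₀) ∧
      ((fun a => s(a, m a)) '' A₀).ncard = A₀.ncard ∧
      vtxs ((fun a => s(a, m a)) '' A₀) ⊆ A₀ ∪ m '' A₀ := by
  have hne : ∀ a ∈ A₀, ∀ b ∈ A₀, a ≠ m b := by
    intro a ha b hb h
    have h1 := hcolA a ha
    have h2 := hcolm b hb
    rw [h] at h1
    rw [h1] at h2
    exact Bool.noConfusion h2
  have hmapinj : Set.InjOn (fun a => s(a, m a)) A₀ := by
    intro a ha b hb hab
    simp only [Sym2.eq_iff] at hab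
    rcases hab with ⟨h1, -⟩ | ⟨h1, h2⟩
    · exact h1
    · exact absurd h1 (hne a ha b hb)
  refine ⟨⟨?_, ?_⟩, Set.ncard_image_of_injOn hmapinj, ?_⟩
  · rintro e ⟨a, ha, rfl⟩
    exact G.mem_edgeSet.mpr (hadj a ha)
  · rintro e₁ ⟨a, ha, rfl⟩ e₂ ⟨b, hb, rfl⟩ hne' u hu₁ hu₂
    have hab : a ≠ b := fun h => hne' (by rw [h])
    rcases Sym2.mem_iff.mp hu₁ with h1 | h1 <;> rcases Sym2.mem_iff.mp hu₂ with h2 | h2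
    · exact hab (h1.symm.trans h2)
    · exact hne a ha b hb (h1.symm.trans h2)
    · exact hne b hb a ha (h2.symm.trans h1)
    · exact hab (hinj ha hb (h1.symm.trans h2))
  · rintro v ⟨e, ⟨a, ha, rfl⟩, hv⟩
    rcases Sym2.mem_iff.mp hv with rfl | rfl
    · exact Or.inl ha
    · exact Or.inr ⟨a, ha, rfl⟩

lemma cover_lemma {G : SimpleGraph V} {M : G.Subgraph} {f : V → V}
    (hfinv : ∀ v, f (f v) = v)
    (hfedge : ∀ e ∈ M.edgeSet, ∀ v ∈ e, e = s(v, f v))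
    {F₀ : Set (Sym2 V)} {T : Set V} {u₁ u₂ : V}
    (hvtx : vtxs F₀ ⊆ (T ∪ f '' T) ∪ {u₁, u₂}) :
    ∀ e ∈ M.edgeSet, (∃ v ∈ e, v ∈ vtxs F₀) →
      e ∈ insert s(u₁, f u₁) (insert s(u₂, f u₂) ((fun t => s(t, f t)) '' T)) := by
  rintro e he ⟨v, hv, hvF⟩
  have hev := hfedge e he v hv
  rcases hvtx hvF with (hT | ⟨t, ht, rfl⟩) | (h | h)
  · exact Set.mem_insert_iff.mpr (Or.inr (Set.mem_insert_iff.mpr (Or.inr ⟨v, hT, hev.symm⟩)))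
  · refine Set.mem_insert_iff.mpr (Or.inr (Set.mem_insert_iff.mpr (Or.inr ⟨t, ht, ?_⟩)))
    rw [hev, hfinv t, Sym2.eq_swap]
  · rw [h] at hev
    exact Set.mem_insert_iff.mpr (Or.inl hev)
  · rw [h] at hev
    exact Set.mem_insert_iff.mpr (Or.inr (Set.mem_insert_iff.mpr (Or.inl hev)))

lemma contra_main [Fintype V] {G : SimpleGraph V} {k j : ℕ} (hext : KExtendable G k)
    {M : G.Subgraph} (hM : M.IsPerfectMatching) {f : V → V}
    (hf1 : ∀ v, M.Adj v (f v)) (hf2 : ∀ v w, M.Adj v w → w = f v)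
    {S X T' : Set V} {F₀ E' : Set (Sym2 V)}
    (hF₀ : IsMatchingSet G F₀) (hE'M : E' ⊆ M.edgeSet)
    (hcov : ∀ e ∈ M.edgeSet, (∃ v ∈ e, v ∈ vtxs F₀) → e ∈ E')
    (hF₀c : F₀.ncard = j + 1) (hjk : j + 1 ≤ k) (hE'c : E'.ncard ≤ j + 2)
    (hSne : S.Nonempty) (hXcard : X.ncard = S.ncard + j)
    (hSX : ∀ s ∈ S, ∀ v, G.Adj s v → v ∈ X)
    (hT'X : T' ⊆ X) (hT'c : T'.ncard = j + 1)
    (hT'F : ∀ t ∈ T', ∃ w, w ∉ S ∧ s(t, w) ∈ F₀) : False := by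
  have hcardV := hext.2.1
  obtain ⟨F, hF, hF₀F, hFc⟩ := pad_matching (k := k) hM hf1 hf2 hF₀ hE'M hcov
    (by rw [hF₀c]; exact hjk) (by rw [hF₀c]; omega)
  obtain ⟨M'', hM'', hFM''⟩ := hext.2.2.2 F hF hFc
  obtain ⟨g, hg1, hg2⟩ := partner_exists hM''
  obtain ⟨hgadj, hginv, -⟩ := partner_facts hg1 hg2
  refine pigeon g hginv (fun s hs => hSX s hs (g s) (hgadj s)) hT'X ?_ hXcard hT'c hSne
  intro t ht hgS
  obtain ⟨w, hwS, hwF⟩ := hT'F t ht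
  have hMtw : M''.Adj t w := Subgraph.mem_edgeSet.mp (hFM'' (hF₀F hwF))
  rw [← hg2 t w hMtw] at hgS
  exact hwS hgS

lemma surplus [Fintype V] {G : SimpleGraph V} {k : ℕ} (hext : KExtendable G k) :
    ∀ j, j ≤ k → ∀ col : V → Bool, Proper G col → ∀ S : Set V, S.Nonempty →
      S ⊆ fside col → NbS G S ≠ tside col → S.ncard + j ≤ (NbS G S).ncard := by
  classical
  have bool_ft : ∀ b : Bool, b ≠ true → b = false := by decide
  obtain ⟨F₁, hF₁, hF₁c⟩ := hext.2.2.1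
  obtain ⟨M, hM, -⟩ := hext.2.2.2 F₁ hF₁ hF₁c
  obtain ⟨f, hf1, hf2⟩ := partner_exists hM
  obtain ⟨hfadj, hfinv, hfedge⟩ := partner_facts hf1 hf2
  have hfinj : Function.Injective f := fun a b hab => by rw [← hfinv a, hab, hfinv b]
  intro j
  induction j with
  | zero =>
    intro _ col hcol S hSne hSf hXne
    have himg : ∀ s ∈ S, f s ∈ NbS G S := fun s hs => ⟨s, hs, hfadj s⟩
    simpa using Set.ncard_le_ncard_of_injOn f himg hfinj.injOn (Set.toFinite _)
  | succ j ih =>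
    intro hjk col hcol S hSne hSf hXne
    have hΦ := ih (Nat.le_of_succ_le hjk)
    by_contra hcon
    push_neg at hcon
    set X := NbS G S with hXdef
    have hXT : X ⊆ tside col := nbs_subset_tside hcol hSf
    have hXcard : X.ncard = S.ncard + j :=
      le_antisymm (by omega) (hΦ col hcol S hSne hSf hXne)
    have hSX : ∀ s ∈ S, ∀ v, G.Adj s v → v ∈ X := fun s hs v hv => ⟨s, hs, hv⟩
    have hfS : f '' S ⊆ X := by rintro v ⟨s, hs, rfl⟩; exact ⟨s, hs, hfadj s⟩
    have hfScard : (f '' S).ncard = S.ncard := Set.ncard_image_of_injective S hfinj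
    set T := X \ f '' S with hTdef
    have hTX : T ⊆ X := Set.diff_subset
    have hTcard : T.ncard = j := by
      rw [hTdef, Set.ncard_diff hfS (Set.toFinite _), hXcard, hfScard]; omega
    set Y := fside col \ S with hYdef
    have hcolX : ∀ x ∈ X, col x = true := fun x hx => hXT hx
    have hcolS : ∀ s ∈ S, col s = false := fun s hs => hSf hs
    have hcolfX : ∀ x ∈ X, col (f x) = false := by
      intro x hx
      refine bool_ft _ (fun h => hcol (hfadj x) ?_)
      rw [hcolX x hx, h]
    have hfT_Y : ∀ t ∈ T, f t ∈ Y := by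
      intro t ht
      refine ⟨hcolfX t (hTX ht), fun hfS' => ?_⟩
      exact ht.2 ⟨f t, hfS', by rw [hfinv t]⟩
    set Q := f '' T with hQdef
    have hQY : Q ⊆ Y := by rintro v ⟨t, ht, rfl⟩; exact hfT_Y t ht
    have hQcard : Q.ncard = j := by
      rw [hQdef, Set.ncard_image_of_injective T hfinj, hTcard]
    have hts := sides_eq hM hcol
    have hXss : X ⊂ tside col := Set.ssubset_iff_subset_ne.mpr ⟨hXT, hXne⟩
    have hXlt : X.ncard < (tside col).ncard :=
      Set.ncard_lt_ncard hXss (Set.toFinite _)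
    have hScard_fs : S.ncard ≤ (fside col).ncard := Set.ncard_le_ncard hSf (Set.toFinite _)
    have hYcard : Y.ncard = (fside col).ncard - S.ncard :=
      Set.ncard_diff hSf (Set.toFinite _)
    by_cases H1 : ∃ x ∈ X \ T, ∃ y ∈ Y \ Q, G.Adj x y
    · obtain ⟨x, hx, y, hy, hxy⟩ := H1
      set m : V → V := fun a => if a = x then y else f a with hm
      set A₀ : Set V := insert x T with hA₀
      have hxT : x ∉ T := hx.2
      have hmx : m x = y := by rw [hm]; simp
      have hmT : ∀ t ∈ T, m t = f t := by
        intro t ht; rw [hm]; simp only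
        rw [if_neg]; rintro rfl; exact hxT ht
      have hA₀X : A₀ ⊆ X := Set.insert_subset hx.1 hTX
      have hA₀c : A₀.ncard = j + 1 := by
        rw [hA₀, Set.ncard_insert_of_notMem hxT (Set.toFinite _), hTcard]
      have hmemY : ∀ a ∈ A₀, m a ∈ Y := by
        intro a ha
        rcases Set.mem_insert_iff.mp ha with rfl | haT
        · rw [hmx]; exact hy.1
        · rw [hmT a haT]; exact hfT_Y a haT
      have hadj : ∀ a ∈ A₀, G.Adj a (m a) := by
        intro a ha
        rcases Set.mem_insert_iff.mp ha with rfl | haT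
        · rw [hmx]; exact hxy
        · rw [hmT a haT]; exact hfadj a
      have hinjm : Set.InjOn m A₀ := by
        intro a ha b hb hab
        rcases Set.mem_insert_iff.mp ha with rfl | haT <;>
          rcases Set.mem_insert_iff.mp hb with rfl | hbT
        · rfl
        · rw [hmx, hmT b hbT] at hab
          exact absurd (⟨b, hbT, hab.symm⟩ : y ∈ Q) hy.2
        · rw [hmx, hmT a haT] at hab
          exact absurd (⟨a, haT, hab⟩ : y ∈ Q) hy.2
        · rw [hmT a haT, hmT b hbT] at hab
          exact hfinj hab
      obtain ⟨hFmat, hFcard, hFvtx⟩ := matching_image hcol hadj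
        (fun a ha => hcolX a (hA₀X ha)) (fun a ha => (hmemY a ha).1) hinjm
      have hvtx2 : vtxs ((fun a => s(a, m a)) '' A₀) ⊆ (T ∪ f '' T) ∪ {x, y} := by
        intro v hv
        rcases hFvtx hv with ha | ⟨a, ha, rfl⟩
        · rcases Set.mem_insert_iff.mp ha with rfl | haT
          · exact Or.inr (Or.inl rfl)
          · exact Or.inl (Or.inl haT)
        · rcases Set.mem_insert_iff.mp ha with rfl | haT
          · rw [hmx]; exact Or.inr (Or.inr rfl)
          · rw [hmT a haT]; exact Or.inl (Or.inr ⟨a, haT, rfl⟩)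
      have hE'M : insert s(x, f x) (insert s(y, f y) ((fun t => s(t, f t)) '' T))
          ⊆ M.edgeSet := by
        intro e he
        rcases Set.mem_insert_iff.mp he with rfl | he
        · exact Subgraph.mem_edgeSet.mpr (hf1 x)
        · rcases Set.mem_insert_iff.mp he with rfl | ⟨t, ht, rfl⟩
          · exact Subgraph.mem_edgeSet.mpr (hf1 y)
          · exact Subgraph.mem_edgeSet.mpr (hf1 t)
      have hE'c : (insert s(x, f x) (insert s(y, f y)
          ((fun t => s(t, f t)) '' T))).ncard ≤ j + 2 := by
        have h1 := Set.ncard_insert_le s(x, f x)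
          (insert s(y, f y) ((fun t => s(t, f t)) '' T))
        have h2 := Set.ncard_insert_le s(y, f y) ((fun t => s(t, f t)) '' T)
        have h3 := Set.ncard_image_le (s := T) (f := fun t => s(t, f t)) (Set.toFinite _)
        omega
      exact contra_main hext hM hf1 hf2 hFmat hE'M
        (cover_lemma hfinv hfedge hvtx2) (by rw [hFcard, hA₀c]) hjk hE'c
        hSne hXcard hSX hA₀X hA₀c
        (fun t ht => ⟨m t, fun hmS => (hmemY t ht).2 hmS, ⟨t, ht, rfl⟩⟩)
    · push_neg at H1
      have hNX'sub : NbS G (f '' S) ⊆ S ∪ Q := by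
        rintro v ⟨x, hxS, hadjv⟩
        have hxX : x ∈ X := hfS hxS
        have hcolv : col v = false := by
          refine bool_ft _ (fun h => hcol hadjv ?_)
          rw [hcolX x hxX, h]
        by_cases hvS : v ∈ S
        · exact Or.inl hvS
        by_cases hvQ : v ∈ Q
        · exact Or.inr hvQ
        exact absurd hadjv (H1 x ⟨hxX, fun h => h.2 hxS⟩ v ⟨⟨hcolv, hvS⟩, hvQ⟩)
      rcases Nat.eq_zero_or_pos j with hj0 | hj1
      · subst hj0
        have hT0 : T = ∅ := (Set.ncard_eq_zero (Set.toFinite _)).mp hTcard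
        have hQ0 : Q = ∅ := by rw [hQdef, hT0]; simp
        have hclosed : ∀ u v, G.Adj u v → u ∈ S ∪ X → v ∈ S ∪ X := by
          intro u v huv hu
          rcases hu with hu | hu
          · exact Or.inr ⟨u, hu, huv⟩
          · left
            by_contra hvS
            have hcv : col v = false := by
              refine bool_ft _ (fun h => hcol huv ?_)
              rw [hcolX u hu, h]
            refine H1 u ⟨hu, ?_⟩ v ⟨⟨hcv, hvS⟩, ?_⟩ huv
            · rw [hT0]; exact Set.notMem_empty u
            · rw [hQ0]; exact Set.notMem_empty v
        obtain ⟨s₀, hs₀⟩ := hSne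
        obtain ⟨xd, hxdT, hxdX⟩ := Set.exists_of_ssubset hXss
        have hwalk : ∀ {a b : V} (_ : G.Walk a b), a ∈ S ∪ X → b ∈ S ∪ X := by
          intro a b p
          induction p with
          | nil => exact id
          | cons h q ih => exact fun ha => ih (hclosed _ _ h ha)
        obtain ⟨p⟩ := (hext.1).preconnected s₀ xd
        rcases hwalk p (Or.inl hs₀) with h | h
        · have h1 := hcolS _ h
          have h2 : col xd = true := hxdT
          rw [h1] at h2; exact Bool.noConfusion h2
        · exact hxdX h
      · have hfSne : (f '' S).Nonempty := hSne.image f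
        have hNX'ne_t : NbS G (f '' S) ≠ tside (fun v => !col v) := by
          rw [tside_flip]
          intro hfull
          have hsub : fside col ⊆ S ∪ Q := by rw [← hfull]; exact hNX'sub
          have h1 : (fside col).ncard ≤ (S ∪ Q).ncard :=
            Set.ncard_le_ncard hsub (Set.toFinite _)
          have h2 := Set.ncard_union_le S Q
          omega
        have hΦ' := hΦ (fun v => !col v) (proper_flip hcol) (f '' S) hfSne
          (by rw [fside_flip]; exact fun v hv => hXT (hfS hv)) hNX'ne_t
        have hNX'eq : NbS G (f '' S) = S ∪ Q := by
          refine Set.eq_of_subset_of_ncard_le hNX'sub ?_ (Set.toFinite _)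
          have h2 := Set.ncard_union_le S Q
          omega
        by_cases H2 : ∃ x₀ ∈ T, ∃ y ∈ Y \ Q, G.Adj x₀ y
        · obtain ⟨x₀, hx₀T, y, hy, hx₀y⟩ := H2
          have hfx₀Q : f x₀ ∈ Q := ⟨x₀, hx₀T, rfl⟩
          have hfx₀N : f x₀ ∈ NbS G (f '' S) := by rw [hNX'eq]; exact Or.inr hfx₀Q
          obtain ⟨xt, hxtS, hxtadj⟩ := hfx₀N
          have hxtX : xt ∈ X := hfS hxtS
          have hxtT : xt ∉ T := fun h => h.2 hxtS
          have hxtx₀ : xt ≠ x₀ := by rintro rfl; exact hxtT hx₀T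
          set m : V → V := fun a => if a = x₀ then y else if a = xt then f x₀ else f a with hm
          set A₀ : Set V := insert xt T with hA₀
          have hmx₀ : m x₀ = y := by rw [hm]; simp
          have hmxt : m xt = f x₀ := by rw [hm]; simp [hxtx₀]
          have hmT : ∀ t ∈ T, t ≠ x₀ → m t = f t := by
            intro t ht htx₀; rw [hm]; simp only
            rw [if_neg htx₀, if_neg (by rintro rfl; exact hxtT ht)]
          have hA₀X : A₀ ⊆ X := Set.insert_subset hxtX hTX
          have hA₀c : A₀.ncard = j + 1 := by
            rw [hA₀, Set.ncard_insert_of_notMem hxtT (Set.toFinite _), hTcard]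
          have hmemY : ∀ a ∈ A₀, m a ∈ Y := by
            intro a ha
            rcases Set.mem_insert_iff.mp ha with rfl | haT
            · rw [hmxt]; exact hQY hfx₀Q
            · by_cases hax₀ : a = x₀
              · subst hax₀; rw [hmx₀]; exact hy.1
              · rw [hmT a haT hax₀]; exact hfT_Y a haT
          have hadj : ∀ a ∈ A₀, G.Adj a (m a) := by
            intro a ha
            rcases Set.mem_insert_iff.mp ha with rfl | haT
            · rw [hmxt]; exact hxtadj
            · by_cases hax₀ : a = x₀
              · subst hax₀; rw [hmx₀]; exact hx₀y
              · rw [hmT a haT hax₀]; exact hfadj a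
          have hinjm : Set.InjOn m A₀ := by
            intro a ha b hb hab
            rcases Set.mem_insert_iff.mp ha with rfl | haT <;>
              rcases Set.mem_insert_iff.mp hb with rfl | hbT
            · rfl
            · by_cases hbx₀ : b = x₀
              · subst hbx₀
                rw [hmxt, hmx₀] at hab
                exact absurd (hab ▸ hfx₀Q) hy.2
              · rw [hmxt, hmT b hbT hbx₀] at hab
                exact absurd (hfinj hab).symm hbx₀
            · by_cases hax₀ : a = x₀
              · subst hax₀
                rw [hmxt, hmx₀] at hab
                exact absurd (hab ▸ hfx₀Q) hy.2
              · rw [hmxt, hmT a haT hax₀] at hab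
                exact absurd (hfinj hab.symm).symm hax₀
            · by_cases hax₀ : a = x₀ <;> by_cases hbx₀ : b = x₀
              · rw [hax₀, hbx₀]
              · subst hax₀
                rw [hmx₀, hmT b hbT hbx₀] at hab
                exact absurd ⟨b, hbT, hab.symm⟩ hy.2
              · subst hbx₀
                rw [hmx₀, hmT a haT hax₀] at hab
                exact absurd ⟨a, haT, hab⟩ hy.2
              · rw [hmT a haT hax₀, hmT b hbT hbx₀] at hab
                exact hfinj hab
          obtain ⟨hFmat, hFcard, hFvtx⟩ := matching_image hcol hadj
            (fun a ha => hcolX a (hA₀X ha)) (fun a ha => (hmemY a ha).1) hinjm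
          have hvtx2 : vtxs ((fun a => s(a, m a)) '' A₀) ⊆ (T ∪ f '' T) ∪ {xt, y} := by
            intro v hv
            rcases hFvtx hv with ha | ⟨a, ha, rfl⟩
            · rcases Set.mem_insert_iff.mp ha with rfl | haT
              · exact Or.inr (Or.inl rfl)
              · exact Or.inl (Or.inl haT)
            · rcases Set.mem_insert_iff.mp ha with rfl | haT
              · rw [hmxt]; exact Or.inl (Or.inr ⟨x₀, hx₀T, rfl⟩)
              · by_cases hax₀ : a = x₀
                · subst hax₀; rw [hmx₀]; exact Or.inr (Or.inr rfl)
                · rw [hmT a haT hax₀]; exact Or.inl (Or.inr ⟨a, haT, rfl⟩)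
          have hE'M : insert s(xt, f xt) (insert s(y, f y) ((fun t => s(t, f t)) '' T))
              ⊆ M.edgeSet := by
            intro e he
            rcases Set.mem_insert_iff.mp he with rfl | he
            · exact Subgraph.mem_edgeSet.mpr (hf1 xt)
            · rcases Set.mem_insert_iff.mp he with rfl | ⟨t, ht, rfl⟩
              · exact Subgraph.mem_edgeSet.mpr (hf1 y)
              · exact Subgraph.mem_edgeSet.mpr (hf1 t)
          have hE'c : (insert s(xt, f xt) (insert s(y, f y)
              ((fun t => s(t, f t)) '' T))).ncard ≤ j + 2 := by
            have h1 := Set.ncard_insert_le s(xt, f xt)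
              (insert s(y, f y) ((fun t => s(t, f t)) '' T))
            have h2 := Set.ncard_insert_le s(y, f y) ((fun t => s(t, f t)) '' T)
            have h3 := Set.ncard_image_le (s := T) (f := fun t => s(t, f t)) (Set.toFinite _)
            omega
          exact contra_main hext hM hf1 hf2 hFmat hE'M
            (cover_lemma hfinv hfedge hvtx2) (by rw [hFcard, hA₀c]) hjk hE'c
            hSne hXcard hSX hA₀X hA₀c
            (fun t ht => ⟨m t, fun hmS => (hmemY t ht).2 hmS, ⟨t, ht, rfl⟩⟩)
        · push_neg at H2
          have hY₀f : Y \ Q ⊆ fside col := fun v hv => hv.1.1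
          have hY₀card : (Y \ Q).ncard = Y.ncard - j := by
            rw [Set.ncard_diff hQY (Set.toFinite _), hQcard]
          have hYc : j + 1 ≤ Y.ncard := by omega
          have hY₀ne : (Y \ Q).Nonempty := by
            rw [← Set.ncard_pos (Set.toFinite _)]
            omega
          have hNY₀X : ∀ v ∈ NbS G (Y \ Q), v ∉ X := by
            rintro v ⟨y, hy, hadjv⟩ hvX
            by_cases hvT : v ∈ T
            · exact H2 v hvT y hy hadjv.symm
            · exact H1 v ⟨hvX, hvT⟩ y hy hadjv.symm
          have hNY₀sub : NbS G (Y \ Q) ⊆ tside col \ X :=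
            fun v hv => ⟨nbs_subset_tside hcol hY₀f hv, hNY₀X v hv⟩
          have hNY₀ne : NbS G (Y \ Q) ≠ tside col := by
            intro h
            obtain ⟨s₀, hs₀⟩ := hSne
            have hfs₀X : f s₀ ∈ X := hfS ⟨s₀, hs₀, rfl⟩
            have hmem : f s₀ ∈ NbS G (Y \ Q) := by rw [h]; exact hXT hfs₀X
            exact hNY₀X _ hmem hfs₀X
          have hΦY := hΦ col hcol (Y \ Q) hY₀ne hY₀f hNY₀ne
          have hup : (NbS G (Y \ Q)).ncard ≤ (tside col).ncard - X.ncard := by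
            have h := Set.ncard_le_ncard hNY₀sub (Set.toFinite _)
            rwa [Set.ncard_diff hXT (Set.toFinite _)] at h
          omega

def cutF (G : SimpleGraph V) (col : V → Bool) (W : Set V) : Set (Sym2 V) :=
  {e | ∃ u v, e = s(u, v) ∧ G.Adj u v ∧ col u = false ∧ u ∈ W ∧ v ∉ W}

lemma nbs_subset_fside {G : SimpleGraph V} {col : V → Bool} (hcol : Proper G col)
    {S : Set V} (hS : S ⊆ tside col) : NbS G S ⊆ fside col := by
  have h := nbs_subset_tside (proper_flip hcol) (S := S) (by rw [fside_flip]; exact hS)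
  rwa [tside_flip] at h

lemma sides_ge [Fintype V] {G : SimpleGraph V} {M : G.Subgraph} (hM : M.IsPerfectMatching)
    {col : V → Bool} (hcol : Proper G col) {k : ℕ} (hcard : 2 * k + 2 ≤ Fintype.card V) :
    k + 1 ≤ (tside col).ncard ∧ k + 1 ≤ (fside col).ncard := by
  have h1 := sides_eq hM hcol
  have h2 := sides_card col
  omega

lemma nbs_singleton (G : SimpleGraph V) (v : V) : NbS G {v} = G.neighborSet v := by
  ext u
  constructor
  · rintro ⟨s, rfl, h⟩; exact h
  · intro h; exact ⟨v, rfl, h⟩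

lemma mindeg [Fintype V] {G : SimpleGraph V} {k : ℕ} (hk : 1 ≤ k) (hext : KExtendable G k)
    {col : V → Bool} (hcol : Proper G col) (v : V) :
    k + 1 ≤ (G.neighborSet v).ncard := by
  obtain ⟨F₁, hF₁, hF₁c⟩ := hext.2.2.1
  obtain ⟨M, hM, -⟩ := hext.2.2.2 F₁ hF₁ hF₁c
  have haux : ∀ col' : V → Bool, Proper G col' → col' v = false →
      k + 1 ≤ (G.neighborSet v).ncard := by
    intro col' hcol' hv
    by_cases hfull : NbS G {v} = tside col'
    · have h1 := (sides_ge hM hcol' hext.2.1).1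
      rw [← hfull, nbs_singleton] at h1
      omega
    · have h := surplus hext k le_rfl col' hcol' {v} ⟨v, rfl⟩
        (by intro u hu; rw [hu]; exact hv) hfull
      rw [nbs_singleton, Set.ncard_singleton] at h
      omega
  cases hcv : col v with
  | false => exact haux col hcol hcv
  | true =>
    refine haux (fun u => !col u) (proper_flip hcol) ?_
    show (!col v) = false
    rw [hcv]
    rfl

lemma cut_ge_nbs [Fintype V] {G : SimpleGraph V} {col : V → Bool} (hcol : Proper G col)
    (W : Set V) :
    (NbS G (W ∩ fside col) \ W).ncard ≤ (cutF G col W).ncard := by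
  classical
  have hch : ∀ v : V, ∃ s : V, v ∈ NbS G (W ∩ fside col) \ W → s ∈ W ∩ fside col ∧ G.Adj s v := by
    intro v
    by_cases hv : v ∈ NbS G (W ∩ fside col) \ W
    · obtain ⟨s, hs, hadj⟩ := hv.1
      exact ⟨s, fun _ => ⟨hs, hadj⟩⟩
    · exact ⟨v, fun h => absurd h hv⟩
  choose nbr hnbr using hch
  have hsubT := nbs_subset_tside hcol (Set.inter_subset_right (s := W))
  refine Set.ncard_le_ncard_of_injOn (fun v => s(nbr v, v)) ?_ ?_ (Set.toFinite _)
  · intro v hv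
    obtain ⟨hs, hadj⟩ := hnbr v hv
    exact ⟨nbr v, v, rfl, hadj, hs.2, hs.1, hv.2⟩
  · intro v hv w hw heq
    rcases Sym2.eq_iff.mp heq with ⟨-, h2⟩ | ⟨-, h2⟩
    · exact h2
    · exfalso
      have hc1 : col v = true := hsubT hv.1
      have hc2 : col (nbr w) = false := ((hnbr w hw).1).2
      rw [h2] at hc1
      rw [hc1] at hc2
      exact Bool.noConfusion hc2

lemma cut_ge_nbs' [Fintype V] {G : SimpleGraph V} {col : V → Bool} (hcol : Proper G col)
    (W : Set V) :
    (NbS G (Wᶜ ∩ tside col) ∩ W).ncard ≤ (cutF G col W).ncard := by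
  classical
  have hch : ∀ v : V, ∃ s : V, v ∈ NbS G (Wᶜ ∩ tside col) ∩ W →
      s ∈ Wᶜ ∩ tside col ∧ G.Adj s v := by
    intro v
    by_cases hv : v ∈ NbS G (Wᶜ ∩ tside col) ∩ W
    · obtain ⟨s, hs, hadj⟩ := hv.1
      exact ⟨s, fun _ => ⟨hs, hadj⟩⟩
    · exact ⟨v, fun h => absurd h hv⟩
  choose nbr hnbr using hch
  have hsubF := nbs_subset_fside hcol (Set.inter_subset_right (s := Wᶜ))
  refine Set.ncard_le_ncard_of_injOn (fun v => s(v, nbr v)) ?_ ?_ (Set.toFinite _)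
  · intro v hv
    obtain ⟨hs, hadj⟩ := hnbr v hv
    exact ⟨v, nbr v, rfl, hadj.symm, hsubF hv.1, hv.2, hs.1⟩
  · intro v hv w hw heq
    rcases Sym2.eq_iff.mp heq with ⟨h1, -⟩ | ⟨h1, -⟩
    · exact h1
    · exfalso
      have hc1 : col v = false := hsubF hv.1
      have hc2 : col (nbr w) = true := ((hnbr w hw).1).2
      rw [h1] at hc1
      rw [hc1] at hc2
      exact Bool.noConfusion hc2

lemma inter_compl_count [Fintype V] (A W : Set V) :
    (W ∩ A).ncard + (Wᶜ ∩ A).ncard = A.ncard := by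
  rw [Set.inter_comm W A, Set.inter_comm Wᶜ A, ← Set.diff_eq]
  exact Set.ncard_inter_add_ncard_diff_eq_ncard A W (Set.toFinite _)

lemma cut_ge_sum [Fintype V] {G : SimpleGraph V} {k : ℕ} (hk : 1 ≤ k) (hext : KExtendable G k)
    {col : V → Bool} (hcol : Proper G col) (W : Set V) :
    (W ∩ fside col).ncard * (k + 1) ≤
      (cutF G col W).ncard + (W ∩ fside col).ncard * (W ∩ tside col).ncard := by
  classical
  have bool_ft : ∀ b : Bool, b ≠ true → b = false := by decide
  have bool_tf : ∀ b : Bool, b ≠ false → b = true := by decide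
  have hNsub : ∀ w ∈ W ∩ fside col, G.neighborSet w ⊆ tside col := by
    intro w hw v hv
    refine bool_tf _ (fun h => hcol hv ?_)
    have h2 : col w = false := hw.2
    rw [h2, h]
  have hper : ∀ w ∈ W ∩ fside col,
      k + 1 ≤ (G.neighborSet w \ W).ncard + (W ∩ tside col).ncard := by
    intro w hw
    have hdeg := mindeg hk hext hcol w
    have hsplit : (G.neighborSet w).ncard ≤
        (G.neighborSet w \ W).ncard + (G.neighborSet w ∩ W).ncard := by
      conv_lhs => rw [← Set.diff_union_inter (G.neighborSet w) W]
      exact Set.ncard_union_le _ _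
    have hcap : (G.neighborSet w ∩ W).ncard ≤ (W ∩ tside col).ncard :=
      Set.ncard_le_ncard (fun v hv => ⟨hv.2, hNsub w hw hv.1⟩) (Set.toFinite _)
    omega
  set sb := (W ∩ fside col).toFinset with hsb
  have hsbcol : ∀ w ∈ sb, col w = false := by
    intro w hw; exact (Set.mem_toFinset.mp hw).2
  set im : V → Finset (Sym2 V) :=
    fun w => (G.neighborSet w \ W).toFinset.image (fun v => s(w, v)) with him
  have himcard : ∀ w ∈ sb, (im w).card = (G.neighborSet w \ W).ncard := by
    intro w hw
    rw [him]
    rw [Finset.card_image_of_injOn, Set.ncard_eq_toFinset_card']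
    intro v hv v' hv' heq
    have hv0 : v ∈ G.neighborSet w \ W := by simpa using hv
    rcases Sym2.eq_iff.mp heq with ⟨-, h2⟩ | ⟨h1, h2⟩
    · exact h2
    · exfalso
      have hc1 : col v = true := hNsub w (Set.mem_toFinset.mp hw) hv0.1
      rw [h2] at hc1
      have hc2 := hsbcol w hw
      rw [hc2] at hc1
      exact Bool.noConfusion hc1
  have hdisj : ∀ w ∈ sb, ∀ w' ∈ sb, w ≠ w' → Disjoint (im w) (im w') := by
    intro w hw w' hw' hne
    rw [Finset.disjoint_left]
    rintro e he he'
    rw [him] at he he'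
    obtain ⟨v, hv, rfl⟩ := Finset.mem_image.mp he
    obtain ⟨v', hv', heq⟩ := Finset.mem_image.mp he'
    rcases Sym2.eq_iff.mp heq.symm with ⟨h1, -⟩ | ⟨h1, -⟩
    · exact hne h1
    · have hc1 : col v' = true := hNsub w' (Set.mem_toFinset.mp hw')
        (Set.mem_toFinset.mp hv').1
      rw [← h1] at hc1
      rw [hsbcol w hw] at hc1
      exact Bool.noConfusion hc1
  have hBsub : sb.biUnion im ⊆ (cutF G col W).toFinset := by
    intro e he
    obtain ⟨w, hw, hei⟩ := Finset.mem_biUnion.mp he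
    rw [him] at hei
    obtain ⟨v, hv, rfl⟩ := Finset.mem_image.mp hei
    rw [Set.mem_toFinset] at hv hw
    exact Set.mem_toFinset.mpr ⟨w, v, rfl, hv.1, hw.2, hw.1, hv.2⟩
  have hcut : ∑ w ∈ sb, (G.neighborSet w \ W).ncard ≤ (cutF G col W).ncard := by
    calc ∑ w ∈ sb, (G.neighborSet w \ W).ncard = ∑ w ∈ sb, (im w).card :=
          Finset.sum_congr rfl (fun w hw => (himcard w hw).symm)
      _ = (sb.biUnion im).card := (Finset.card_biUnion hdisj).symm
      _ ≤ (cutF G col W).toFinset.card := Finset.card_le_card hBsub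
      _ = (cutF G col W).ncard := (Set.ncard_eq_toFinset_card' _).symm
  have hsum : sb.card * (k + 1) ≤
      ∑ w ∈ sb, ((G.neighborSet w \ W).ncard + (W ∩ tside col).ncard) := by
    calc sb.card * (k + 1) = ∑ _w ∈ sb, (k + 1) := by rw [Finset.sum_const, smul_eq_mul]
      _ ≤ _ := Finset.sum_le_sum (fun w hw => hper w (Set.mem_toFinset.mp hw))
  rw [Finset.sum_add_distrib, Finset.sum_const, smul_eq_mul] at hsum
  have hbc : sb.card = (W ∩ fside col).ncard := (Set.ncard_eq_toFinset_card' _).symm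
  rw [hbc] at hsum
  omega

lemma halfbound [Fintype V] {G : SimpleGraph V} {k : ℕ} (hk : 1 ≤ k) (hext : KExtendable G k)
    {col : V → Bool} (hcol : Proper G col) {W : Set V}
    (hb : (W ∩ fside col).Nonempty) (ha' : (Wᶜ ∩ tside col).Nonempty) :
    k + (W ∩ fside col).ncard ≤ (cutF G col W).ncard + (W ∩ tside col).ncard := by
  classical
  obtain ⟨F₁, hF₁, hF₁c⟩ := hext.2.2.1
  obtain ⟨M, hM, -⟩ := hext.2.2.2 F₁ hF₁ hF₁c
  have hts := sides_eq hM hcol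
  have hWt := inter_compl_count (tside col) W
  have hWf := inter_compl_count (fside col) W
  by_cases hNfull : NbS G (W ∩ fside col) = tside col
  · by_cases hak : (W ∩ tside col).ncard ≤ k
    · have hsum := cut_ge_sum hk hext hcol W
      have hbpos : 0 < (W ∩ fside col).ncard := (Set.ncard_pos (Set.toFinite _)).mpr hb
      set b := (W ∩ fside col).ncard with hbdef
      set a := (W ∩ tside col).ncard with hadef
      set c := (cutF G col W).ncard with hcdef
      obtain ⟨d, hd⟩ : ∃ d, k = a + d := ⟨k - a, by omega⟩
      have h1 : b * (k + 1) = b * a + b * d + b := by rw [hd]; ring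
      have h3 : d ≤ b * d := Nat.le_mul_of_pos_left d hbpos
      omega
    · by_cases hN'full : NbS G (Wᶜ ∩ tside col) = fside col
      · have hSbsub : W ∩ fside col ⊆ NbS G (Wᶜ ∩ tside col) ∩ W := by
          intro w hw
          refine ⟨?_, hw.1⟩
          rw [hN'full]; exact hw.2
        have h1 : (W ∩ fside col).ncard ≤ (NbS G (Wᶜ ∩ tside col) ∩ W).ncard :=
          Set.ncard_le_ncard hSbsub (Set.toFinite _)
        have h2 := cut_ge_nbs' hcol W
        omega
      · have hS'f : Wᶜ ∩ tside col ⊆ fside (fun v => !col v) := by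
          rw [fside_flip]; exact Set.inter_subset_right
        have hne : NbS G (Wᶜ ∩ tside col) ≠ tside (fun v => !col v) := by
          rw [tside_flip]; exact hN'full
        have hsur := surplus hext k le_rfl _ (proper_flip hcol) _ ha' hS'f hne
        have hsub : NbS G (Wᶜ ∩ tside col) ⊆
            (NbS G (Wᶜ ∩ tside col) ∩ W) ∪ (Wᶜ ∩ fside col) := by
          intro v hv
          by_cases hvW : v ∈ W
          · exact Or.inl ⟨hv, hvW⟩
          · exact Or.inr ⟨hvW, nbs_subset_fside hcol Set.inter_subset_right hv⟩
        have hsplit : (NbS G (Wᶜ ∩ tside col)).ncard ≤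
            (NbS G (Wᶜ ∩ tside col) ∩ W).ncard + (Wᶜ ∩ fside col).ncard :=
          (Set.ncard_le_ncard hsub (Set.toFinite _)).trans (Set.ncard_union_le _ _)
        have h2 := cut_ge_nbs' hcol W
        omega
  · have hsur := surplus hext k le_rfl col hcol _ hb Set.inter_subset_right hNfull
    have hsub : NbS G (W ∩ fside col) ⊆
        (NbS G (W ∩ fside col) \ W) ∪ (W ∩ tside col) := by
      intro v hv
      by_cases hvW : v ∈ W
      · exact Or.inr ⟨hvW, nbs_subset_tside hcol Set.inter_subset_right hv⟩
      · exact Or.inl ⟨hv, hvW⟩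
    have hsplit : (NbS G (W ∩ fside col)).ncard ≤
        (NbS G (W ∩ fside col) \ W).ncard + (W ∩ tside col).ncard :=
      (Set.ncard_le_ncard hsub (Set.toFinite _)).trans (Set.ncard_union_le _ _)
    have h2 := cut_ge_nbs hcol W
    omega

lemma cut_compl (G : SimpleGraph V) (W : Set V) : edgeCut G W = edgeCut G Wᶜ := by
  ext e
  constructor <;> rintro ⟨he, u, v, rfl, hu, hv⟩
  · exact ⟨he, v, u, Sym2.eq_swap, hv, fun h => h hu⟩
  · exact ⟨he, v, u, Sym2.eq_swap, not_not.mp hv, hu⟩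

lemma cut_split [Fintype V] {G : SimpleGraph V} {col : V → Bool} (hcol : Proper G col)
    (W : Set V) :
    (edgeCut G W).ncard = (cutF G col W).ncard + (cutF G col Wᶜ).ncard := by
  classical
  have bool_ft : ∀ b : Bool, b ≠ true → b = false := by decide
  have bool_tf : ∀ b : Bool, b ≠ false → b = true := by decide
  have hunion : edgeCut G W = cutF G col W ∪ cutF G col Wᶜ := by
    ext e
    constructor
    · rintro ⟨he, u, v, rfl, huW, hvW⟩
      have hadj : G.Adj u v := G.mem_edgeSet.mp he
      cases hcu : col u with
      | false => exact Or.inl ⟨u, v, rfl, hadj, hcu, huW, hvW⟩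
      | true =>
        have hcv : col v = false := bool_ft _ (fun h => hcol hadj (by rw [hcu, h]))
        exact Or.inr ⟨v, u, Sym2.eq_swap, hadj.symm, hcv, hvW, fun h => h huW⟩
    · rintro (⟨u, v, rfl, hadj, hcu, huW, hvW⟩ | ⟨u, v, rfl, hadj, hcu, huW, hvW⟩)
      · exact ⟨G.mem_edgeSet.mpr hadj, u, v, rfl, huW, hvW⟩
      · exact ⟨G.mem_edgeSet.mpr hadj, v, u, Sym2.eq_swap, not_not.mp hvW, huW⟩
  have hdisj : Disjoint (cutF G col W) (cutF G col Wᶜ) := by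
    rw [Set.disjoint_left]
    rintro e ⟨u, v, rfl, hadj, hcu, huW, hvW⟩ ⟨u', v', heq, hadj', hcu', huW', hvW'⟩
    have hcv : col v = true := bool_tf _ (fun h => hcol hadj (by rw [hcu, h]))
    rcases Sym2.eq_iff.mp heq with ⟨h1, -⟩ | ⟨-, h2⟩
    · rw [h1] at huW; exact huW' huW
    · rw [h2, hcu'] at hcv; exact Bool.noConfusion hcv
  rw [hunion]
  exact Set.ncard_union_eq hdisj (Set.toFinite _) (Set.toFinite _)

lemma deg_case [Fintype V] {G : SimpleGraph V} {k : ℕ} (hk : 1 ≤ k) (hext : KExtendable G k)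
    {col : V → Bool} (hcol : Proper G col) {W : Set V} (hWs : W ⊆ fside col)
    (hW2 : 2 ≤ W.ncard) : 2 * k ≤ (edgeCut G W).ncard := by
  classical
  have bool_tf : ∀ b : Bool, b ≠ false → b = true := by decide
  obtain ⟨w₁, hw₁, w₂, hw₂, hne⟩ := (Set.one_lt_ncard (Set.toFinite W)).mp (by omega)
  have hNcol : ∀ w ∈ W, ∀ v ∈ G.neighborSet w, col v = true := by
    intro w hw v hv
    refine bool_tf _ (fun h => hcol hv ?_)
    have h2 : col w = false := hWs hw
    rw [h2, h]
  have hImsub : ∀ w ∈ W, ((fun v => s(w, v)) '' (G.neighborSet w)) ⊆ edgeCut G W := by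
    rintro w hw e ⟨v, hv, rfl⟩
    refine ⟨G.mem_edgeSet.mpr hv, w, v, rfl, hw, fun hvW => ?_⟩
    have h1 := hNcol w hw v hv
    have h2 : col v = false := hWs hvW
    rw [h1] at h2
    exact Bool.noConfusion h2
  have hImcard : ∀ w ∈ W, ((fun v => s(w, v)) '' (G.neighborSet w)).ncard
      = (G.neighborSet w).ncard := by
    intro w hw
    apply Set.ncard_image_of_injOn
    intro v hv v' hv' heq
    rcases Sym2.eq_iff.mp heq with ⟨-, h⟩ | ⟨h1, -⟩
    · exact h
    · exfalso
      have hc := hNcol w hw v' hv'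
      rw [← h1, hWs hw] at hc
      exact Bool.noConfusion hc
  have hdisj : Disjoint ((fun v => s(w₁, v)) '' (G.neighborSet w₁))
      ((fun v => s(w₂, v)) '' (G.neighborSet w₂)) := by
    rw [Set.disjoint_left]
    rintro e ⟨v, hv, rfl⟩ ⟨v', hv', heq⟩
    rcases Sym2.eq_iff.mp heq.symm with ⟨h1, -⟩ | ⟨h1, -⟩
    · exact (hne h1).elim
    · have hc := hNcol w₂ hw₂ v' hv'
      have h2' : col w₁ = false := hWs hw₁
      rw [← h1, h2'] at hc
      exact Bool.noConfusion hc
  have h1 := mindeg hk hext hcol w₁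
  have h2 := mindeg hk hext hcol w₂
  have hsub := Set.union_subset (hImsub w₁ hw₁) (hImsub w₂ hw₂)
  have hle := Set.ncard_le_ncard hsub (Set.toFinite _)
  rw [Set.ncard_union_eq hdisj (Set.toFinite _) (Set.toFinite _),
    hImcard w₁ hw₁, hImcard w₂ hw₂] at hle
  omega

end Stmt17

open Stmt17 in
/-- Every bipartite `k`-extendable graph is essentially `2k`-edge-connected. -/
theorem stmt17 {V : Type*} [Fintype V] (G : SimpleGraph V) (k : ℕ) (hk : 1 ≤ k)
    (hbip : G.Colorable 2) (hext : KExtendable G k) :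
    ∀ W : Set V, 2 ≤ W.ncard → 2 ≤ Wᶜ.ncard → 2 * k ≤ (edgeCut G W).ncard := by
  classical
  have bool_tf : ∀ b : Bool, b ≠ false → b = true := by decide
  intro W hW2 hWc2
  obtain ⟨col, hcol⟩ := exists_col hbip
  have hcompl : edgeCut G W = edgeCut G Wᶜ := cut_compl G W
  rcases Set.eq_empty_or_nonempty (W ∩ fside col) with h1 | h1
  · refine deg_case hk hext (proper_flip hcol) (W := W) ?_ hW2
    rw [fside_flip]
    intro w hw
    by_contra ht
    have hf : col w = false := by
      cases hcw : col w with
      | false => rfl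
      | true => exact absurd hcw ht
    exact (Set.eq_empty_iff_forall_notMem.mp h1) w ⟨hw, hf⟩
  rcases Set.eq_empty_or_nonempty (W ∩ tside col) with h2 | h2
  · refine deg_case hk hext hcol (W := W) ?_ hW2
    intro w hw
    by_contra hf
    exact (Set.eq_empty_iff_forall_notMem.mp h2) w ⟨hw, bool_tf _ hf⟩
  rcases Set.eq_empty_or_nonempty (Wᶜ ∩ fside col) with h3 | h3
  · rw [hcompl]
    refine deg_case hk hext (proper_flip hcol) (W := Wᶜ) ?_ hWc2
    rw [fside_flip]
    intro w hw
    by_contra ht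
    have hf : col w = false := by
      cases hcw : col w with
      | false => rfl
      | true => exact absurd hcw ht
    exact (Set.eq_empty_iff_forall_notMem.mp h3) w ⟨hw, hf⟩
  rcases Set.eq_empty_or_nonempty (Wᶜ ∩ tside col) with h4 | h4
  · rw [hcompl]
    refine deg_case hk hext hcol (W := Wᶜ) ?_ hWc2
    intro w hw
    by_contra hf
    exact (Set.eq_empty_iff_forall_notMem.mp h4) w ⟨hw, bool_tf _ hf⟩
  have hbW := halfbound hk hext hcol h1 h4
  have hbW' := halfbound hk hext hcol (W := Wᶜ) h3 (by rw [compl_compl]; exact h2)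
  have hsplit := cut_split hcol W
  obtain ⟨F₁, hF₁, hF₁c⟩ := hext.2.2.1
  obtain ⟨M, hM, -⟩ := hext.2.2.2 F₁ hF₁ hF₁c
  have hts := sides_eq hM hcol
  have hWt := inter_compl_count (tside col) W
  have hWf := inter_compl_count (fside col) W
  omega
end

section
/- Let k ≥ 1 and let G be a bipartite k-extendable graph with bipartition (A, B). Let e = ab and e' = a'b' be edges of G with a, a' ∈ A, b, b' ∈ B, sharing no endpoint, and such that a is adjacent to b' in G. Then the graph H obtained from G by deleting the edges e and e' is (k−1)-extendable; that is, H has a matching consisting of k−1 edges and every matching of H consisting of k−1 edges is contained in a perfect matching of H (for k = 1 this says H has a perfect matching). -/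
open SimpleGraph

/-! In a `k`-extendable graph every nonempty set `S` of at most `k` vertices has more than `|S|`
neighbours: if `|N(S)| ≤ |S|`, either some edge `xw` with `x ∉ S`, `w ∈ N(S)` lies in a perfect
matching, whose partner map sends `S` injectively into `N(S) \ {w}`, or there is no such edge and,
by connectivity, `S ∪ N(S)` is the whole vertex set, of size at most `2k < 2k + 2`. In the
bipartite case Hall's theorem then matches any `k` vertices of one side containing `N(v)` into
`V - v`, and extending this `k`-matching to a perfect matching leaves no partner for `v`: every
degree exceeds `k`.

Given a `(k-1)`-matching `F` of `H = G - ab - a'b'`, the degree bound yields an edge `g` of `H`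
disjoint from `F` such that `F + g` covers a vertex of `ab` and a vertex of `a'b'` (when `F` covers
none of `a, b, a', b'`, take `g = ab'`). A perfect matching of `G` containing the `k`-matching
`F + g` then contains neither `ab` nor `a'b'`, so it is a perfect matching of `H`. -/

section Matchings

variable {V : Type*}

def coverSet (F : Set (Sym2 V)) : Set V := {v | ∃ e ∈ F, v ∈ e}

@[simp]
lemma mem_coverSet_insert {F : Set (Sym2 V)} {g : Sym2 V} {u : V} :
    u ∈ coverSet (insert g F) ↔ u ∈ g ∨ u ∈ coverSet F := by
  simp [coverSet]

lemma ncard_inter_coverSet_le {F : Set (Sym2 V)} (hF : F.Finite) (T : Set V) {n : ℕ}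
    (h : ∀ e ∈ F, (T ∩ {v | v ∈ e}).ncard ≤ n) : (T ∩ coverSet F).ncard ≤ n * F.ncard := by
  classical
  have hT : T ∩ coverSet F = ⋃ e ∈ hF.toFinset, T ∩ {v | v ∈ e} := by
    ext v
    simp [coverSet]
  calc (T ∩ coverSet F).ncard ≤ ∑ e ∈ hF.toFinset, (T ∩ {v | v ∈ e}).ncard :=
        hT ▸ Finset.set_ncard_biUnion_le _ _
    _ ≤ ∑ _e ∈ hF.toFinset, n := Finset.sum_le_sum fun e he => h e (hF.mem_toFinset.mp he)
    _ = n * F.ncard := by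
      rw [Finset.sum_const, smul_eq_mul, Set.ncard_eq_toFinset_card F hF, mul_comm]

lemma ncard_coverSet_le {F : Set (Sym2 V)} (hF : F.Finite) :
    (coverSet F).ncard ≤ 2 * F.ncard := by
  simpa using ncard_inter_coverSet_le hF Set.univ fun e _ => by
    induction e using Sym2.ind with
    | _ x y =>
      rw [Set.univ_inter, show {v | v ∈ s(x, y)} = {x, y} by ext; simp]
      exact (Set.ncard_insert_le x {y}).trans (by simp)

lemma exists_notMem_coverSet [Fintype V] {F : Set (Sym2 V)}
    (hF : 2 * F.ncard < Fintype.card V) : ∃ v, v ∉ coverSet F := by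
  by_contra! h
  have hcov := ncard_coverSet_le (Set.toFinite F)
  rw [Set.eq_univ_of_forall h, Set.ncard_univ, Nat.card_eq_fintype_card] at hcov
  omega

variable {G : SimpleGraph V}

lemma IsMatchingSet.insert_mk {F : Set (Sym2 V)} (hF : IsMatchingSet G F) {p q : V}
    (hpq : G.Adj p q) (hp : p ∉ coverSet F) (hq : q ∉ coverSet F) :
    IsMatchingSet G (insert s(p, q) F) := by
  have hpqF : ∀ u ∈ s(p, q), u ∉ coverSet F := by
    rintro u hu
    rcases Sym2.mem_iff.mp hu with rfl | rfl
    exacts [hp, hq]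
  refine ⟨Set.insert_subset (G.mem_edgeSet.mpr hpq) hF.1, ?_⟩
  rintro e₁ (rfl | he₁) e₂ (rfl | he₂) hne u hu₁ hu₂
  · exact hne rfl
  · exact hpqF u hu₁ ⟨e₂, he₂, hu₂⟩
  · exact hpqF u hu₂ ⟨e₁, he₁, hu₁⟩
  · exact hF.2 e₁ he₁ e₂ he₂ hne u hu₁ hu₂

lemma ncard_insert_mk {F : Set (Sym2 V)} (hF : F.Finite) {p : V} (hp : p ∉ coverSet F) (q : V) :
    (insert s(p, q) F).ncard = F.ncard + 1 :=
  Set.ncard_insert_of_notMem (fun h => hp ⟨_, h, Sym2.mem_mk_left p q⟩) hF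

lemma isMatchingSet_range_mk {S : Set V} {f : S → V} (hf : Function.Injective f)
    (hfS : ∀ x y : S, (x : V) ≠ f y) (hadj : ∀ x : S, G.Adj x (f x)) :
    IsMatchingSet G (Set.range fun x : S => s(↑x, f x)) := by
  refine ⟨Set.range_subset_iff.mpr hadj, ?_⟩
  rintro _ ⟨x, rfl⟩ _ ⟨y, rfl⟩ hne u hux huy
  have hxy : x ≠ y := fun h => hne (h ▸ rfl)
  rcases Sym2.mem_iff.mp hux with rfl | rfl <;> rcases Sym2.mem_iff.mp huy with h | h
  · exact hxy (Subtype.ext h)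
  · exact hfS x y h
  · exact hfS y x h.symm
  · exact hxy (hf h)

lemma ncard_range_mk {S : Set V} {f : S → V} (hfS : ∀ x y : S, (x : V) ≠ f y) :
    (Set.range fun x : S => s(↑x, f x)).ncard = S.ncard := by
  rw [Set.ncard_range_of_injective, Nat.card_coe_set_eq]
  intro x y hxy
  rcases Sym2.eq_iff.mp hxy with ⟨h, -⟩ | ⟨h, -⟩
  · exact Subtype.ext h
  · exact absurd h (hfS x y)

namespace SimpleGraph.Subgraph

variable {M : G.Subgraph}

lemma IsMatching.eq_of_mem_edgeSet (hM : M.IsMatching) {e₁ e₂ : Sym2 V}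
    (h₁ : e₁ ∈ M.edgeSet) (h₂ : e₂ ∈ M.edgeSet) {u : V} (hu₁ : u ∈ e₁) (hu₂ : u ∈ e₂) :
    e₁ = e₂ := by
  obtain ⟨w₁, rfl⟩ := Sym2.mem_iff_exists.mp hu₁
  obtain ⟨w₂, rfl⟩ := Sym2.mem_iff_exists.mp hu₂
  rw [hM.eq_of_adj_left (M.mem_edgeSet.mp h₁) (M.mem_edgeSet.mp h₂)]

lemma IsMatching.isMatchingSet (hM : M.IsMatching) {F : Set (Sym2 V)} (hF : F ⊆ M.edgeSet) :
    IsMatchingSet G F :=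
  ⟨hF.trans M.edgeSet_subset, fun _ h₁ _ h₂ hne _ hu₁ hu₂ =>
    hne (hM.eq_of_mem_edgeSet (hF h₁) (hF h₂) hu₁ hu₂)⟩

lemma IsPerfectMatching.card_le_two_mul_ncard_edgeSet [Fintype V] (hM : M.IsPerfectMatching) :
    Fintype.card V ≤ 2 * M.edgeSet.ncard := by
  have hcov : coverSet M.edgeSet = Set.univ := Set.eq_univ_of_forall fun v => by
    obtain ⟨w, hvw⟩ := (hM.1 (hM.2 v)).exists
    exact ⟨s(v, w), M.mem_edgeSet.mpr hvw, Sym2.mem_mk_left v w⟩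
  simpa [hcov] using ncard_coverSet_le (Set.toFinite M.edgeSet)

lemma IsPerfectMatching.exists_injective_adj (hM : M.IsPerfectMatching) :
    ∃ f : V → V, Function.Injective f ∧ ∀ v, M.Adj v (f v) := by
  choose f hf using fun v => (hM.1 (hM.2 v)).exists
  exact ⟨f, fun u u' h => hM.1.eq_of_adj_right (hf u) (h ▸ hf u'), hf⟩

lemma IsPerfectMatching.ncard_le_ncard [Finite V] (hM : M.IsPerfectMatching) {A B : Set V}
    (hbip : G.IsBipartiteWith A B) : A.ncard ≤ B.ncard := by
  obtain ⟨f, hf, hadj⟩ := hM.exists_injective_adj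
  exact Set.ncard_le_ncard_of_injOn f (fun v hv => hbip.mem_of_mem_adj hv (M.adj_sub (hadj v)))
    hf.injOn

lemma IsPerfectMatching.exists_deleteEdges (hM : M.IsPerfectMatching) {s : Set (Sym2 V)}
    (hs : ∀ e ∈ s, e ∉ M.edgeSet) :
    ∃ M' : (G.deleteEdges s).Subgraph, M'.IsPerfectMatching ∧ M'.edgeSet = M.edgeSet := by
  have hle : M.spanningCoe ≤ G.deleteEdges s := fun v w h =>
    SimpleGraph.deleteEdges_adj.mpr ⟨M.adj_sub h, fun he => hs _ he (M.mem_edgeSet.mpr h)⟩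
  refine ⟨_, (IsPerfectMatching.toSubgraph_iff hle).mpr hM, ?_⟩
  ext e
  induction e using Sym2.ind with
  | _ v w => simp

end SimpleGraph.Subgraph

end Matchings

section Bipartite

variable {V : Type*} {G : SimpleGraph V} {A B : Set V}

lemma SimpleGraph.IsBipartiteWith.not_adj_of_adj_of_adj (hbip : G.IsBipartiteWith A B)
    {v x y : V} (hvx : G.Adj v x) (hvy : G.Adj v y) : ¬G.Adj x y := by
  have key : ∀ {A B : Set V}, G.IsBipartiteWith A B → v ∈ A → ¬G.Adj x y := fun h hv hxy =>
    Set.disjoint_left.mp h.disjoint (h.mem_of_mem_adj' (h.mem_of_mem_adj hv hvy) hxy)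
      (h.mem_of_mem_adj hv hvx)
  rcases hbip.mem_of_adj hvx with ⟨hv, -⟩ | ⟨hv, -⟩
  exacts [key hbip hv, key hbip.symm hv]

lemma ncard_neighborSet_inter_coverSet_le [Finite V] (hbip : G.IsBipartiteWith A B) (v : V)
    {F : Set (Sym2 V)} (hF : F ⊆ G.edgeSet) :
    (G.neighborSet v ∩ coverSet F).ncard ≤ F.ncard := by
  refine (ncard_inter_coverSet_le (Set.toFinite F) (G.neighborSet v) fun e he => ?_).trans_eq
    (one_mul _)
  refine Set.ncard_le_one_iff_subsingleton.mpr fun x ⟨hx, hxe⟩ y ⟨hy, hye⟩ => ?_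
  by_contra hxy
  have hxy' : s(x, y) ∈ G.edgeSet := (Sym2.mem_and_mem_iff hxy).mp ⟨hxe, hye⟩ ▸ hF he
  exact hbip.not_adj_of_adj_of_adj hx hy hxy'

end Bipartite

namespace KExtendable

variable {V : Type*} [Fintype V] {G : SimpleGraph V} {k : ℕ}

lemma exists_isPerfectMatching (hext : KExtendable G k) :
    ∃ M : G.Subgraph, M.IsPerfectMatching ∧ k + 1 ≤ M.edgeSet.ncard := by
  obtain ⟨-, hcard, ⟨F, hF, hFk⟩, hextend⟩ := hext
  obtain ⟨M, hM, -⟩ := hextend F hF hFk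
  exact ⟨M, hM, by have := hM.card_le_two_mul_ncard_edgeSet; omega⟩

lemma exists_isMatchingSet_deleteEdges (hext : KExtendable G k) {s : Set (Sym2 V)} {j : ℕ}
    (hj : j + s.ncard ≤ k + 1) : ∃ F, IsMatchingSet (G.deleteEdges s) F ∧ F.ncard = j := by
  obtain ⟨M, hM, hMk⟩ := hext.exists_isPerfectMatching
  have hdiff : j ≤ (M.edgeSet \ s).ncard := by
    have := Set.le_ncard_sdiff s M.edgeSet
    omega
  obtain ⟨F, hFM, hFj⟩ := Set.exists_subset_card_eq hdiff
  refine ⟨F, ⟨fun e he => ?_, (hM.1.isMatchingSet (hFM.trans Set.sdiff_subset)).2⟩, hFj⟩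
  rw [edgeSet_deleteEdges]
  exact ⟨M.edgeSet_subset (hFM he).1, (hFM he).2⟩

lemma exists_isMatchingSet_mem (hext : KExtendable G k) (hk : 1 ≤ k) {x w : V}
    (hxw : G.Adj x w) : ∃ F, IsMatchingSet G F ∧ F.ncard = k ∧ s(x, w) ∈ F := by
  obtain ⟨M, hM, hMk⟩ := hext.exists_isPerfectMatching
  obtain ⟨x', hxx'⟩ := (hM.1 (hM.2 x)).exists
  obtain ⟨w', hww'⟩ := (hM.1 (hM.2 w)).exists
  set P := {e ∈ M.edgeSet | x ∉ e ∧ w ∉ e}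
  have hMP : M.edgeSet ⊆ P ∪ {s(x, x'), s(w, w')} := by
    intro e he
    by_cases hx : x ∈ e
    · exact Or.inr (Or.inl (hM.1.eq_of_mem_edgeSet he (M.mem_edgeSet.mpr hxx') hx
        (Sym2.mem_mk_left _ _)))
    by_cases hw : w ∈ e
    · exact Or.inr (Or.inr (hM.1.eq_of_mem_edgeSet he (M.mem_edgeSet.mpr hww') hw
        (Sym2.mem_mk_left _ _)))
    exact Or.inl ⟨he, hx, hw⟩
  have hP : k - 1 ≤ P.ncard := by
    have h₁ := Set.ncard_le_ncard hMP
    have h₂ := Set.ncard_union_le P {s(x, x'), s(w, w')}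
    have h₃ := Set.ncard_insert_le s(x, x') {s(w, w')}
    rw [Set.ncard_singleton] at h₃
    omega
  obtain ⟨Q, hQP, hQk⟩ := Set.exists_subset_card_eq hP
  have hx : x ∉ coverSet Q := fun ⟨_, he, hxe⟩ => (hQP he).2.1 hxe
  have hw : w ∉ coverSet Q := fun ⟨_, he, hwe⟩ => (hQP he).2.2 hwe
  refine ⟨insert s(x, w) Q, ?_, ?_, Set.mem_insert _ _⟩
  · exact (hM.1.isMatchingSet (hQP.trans (Set.sep_subset _ _))).insert_mk hxw hx hw
  · rw [ncard_insert_mk (Set.toFinite Q) hx]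
    omega

lemma exists_isPerfectMatching_adj (hext : KExtendable G k) (hk : 1 ≤ k) {x w : V}
    (hxw : G.Adj x w) : ∃ M : G.Subgraph, M.IsPerfectMatching ∧ M.Adj x w := by
  obtain ⟨F, hF, hFk, hxwF⟩ := hext.exists_isMatchingSet_mem hk hxw
  obtain ⟨M, hM, hFM⟩ := hext.2.2.2 F hF hFk
  exact ⟨M, hM, hFM hxwF⟩

lemma ncard_lt_ncard_neighbors (hext : KExtendable G k) {S : Set V} (hS : S.Nonempty)
    (hSk : S.ncard ≤ k) : S.ncard < {w | ∃ y ∈ S, G.Adj y w}.ncard := by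
  set N := {w | ∃ y ∈ S, G.Adj y w}
  by_contra! hNS
  by_cases hclosed : ∃ x w, G.Adj x w ∧ w ∈ N ∧ x ∉ S
  · obtain ⟨x, w, hxw, hwN, hxS⟩ := hclosed
    have hk : 1 ≤ k := ((Set.ncard_pos).mpr hS).trans_le hSk
    obtain ⟨M, hM, hMxw⟩ := hext.exists_isPerfectMatching_adj hk hxw
    obtain ⟨f, hf, hfadj⟩ := hM.exists_injective_adj
    -- the partner of `w` is `x ∉ S`, so the partners of `S` lie in `N \ {w}`
    have hmaps : Set.MapsTo f S (N \ {w}) := fun y hy =>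
      ⟨⟨y, hy, M.adj_sub (hfadj y)⟩, fun hfy =>
        hxS (hM.1.eq_of_adj_right (hfy ▸ hfadj y) hMxw ▸ hy)⟩
    have h₁ := Set.ncard_le_ncard_of_injOn f hmaps hf.injOn
    have h₂ := Set.ncard_sdiff_singleton_lt_of_mem hwN
    omega
  · push Not at hclosed
    have huniv : S ∪ N = Set.univ := Set.eq_univ_of_forall fun z => by
      by_contra hz
      obtain ⟨y, hy⟩ := hS
      obtain ⟨d, -, hd₁, hd₂⟩ :=
        (hext.1.preconnected y z).some.exists_boundary_dart (S ∪ N) (Or.inl hy) hz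
      rcases hd₁ with hd₁ | hd₁
      · exact hd₂ (Or.inr ⟨_, hd₁, d.adj⟩)
      · exact hd₂ (Or.inl (hclosed _ _ d.adj.symm hd₁))
    have h₁ := Set.ncard_union_le S N
    rw [huniv, Set.ncard_univ, Nat.card_eq_fintype_card] at h₁
    have := hext.2.1
    omega

lemma exists_injective_adj_ne (hext : KExtendable G k) {S : Set V} (hSk : S.ncard ≤ k)
    (v : V) : ∃ f : S → V, Function.Injective f ∧ ∀ x : S, G.Adj x (f x) ∧ f x ≠ v := by
  classical
  refine (Fintype.all_card_le_filter_rel_iff_exists_injective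
    fun (x : S) w => G.Adj x w ∧ w ≠ v).mp fun T => ?_
  rcases T.eq_empty_or_nonempty with rfl | hT
  · simp
  set T' : Set V := Subtype.val '' (T : Set S)
  have hT' : T'.ncard = T.card := by
    rw [Set.ncard_image_of_injective _ Subtype.val_injective, Set.ncard_coe_finset]
  have hT'k : T'.ncard ≤ k :=
    (Set.ncard_le_ncard (Set.image_subset_iff.mpr fun (x : S) _ => x.2)).trans hSk
  have hexp : T'.ncard < {w | ∃ y ∈ T', G.Adj y w}.ncard :=
    hext.ncard_lt_ncard_neighbors ((Finset.coe_nonempty.mpr hT).image _) hT'k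
  have hsub : {w | ∃ y ∈ T', G.Adj y w} \ {v} ⊆
      ↑({w | ∃ x ∈ T, G.Adj x w ∧ w ≠ v} : Finset V) := by
    rintro w ⟨⟨_, ⟨x, hx, rfl⟩, hxw⟩, hwv⟩
    simp only [Finset.coe_filter, Finset.mem_univ, true_and]
    exact ⟨x, hx, hxw, hwv⟩
  have h₁ := Set.ncard_le_ncard hsub
  have h₂ := Set.pred_ncard_le_ncard_sdiff_singleton {w | ∃ y ∈ T', G.Adj y w} v
  rw [Set.ncard_coe_finset] at h₁
  omega

lemma lt_degN (hext : KExtendable G k) {A B : Set V} (hAB : IsCompl A B)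
    (hbip : G.IsBipartiteWith A B) (v : V) : k < degN G v := by
  wlog hv : v ∈ A generalizing A B
  · exact this hAB.symm hbip.symm (hAB.compl_eq ▸ hv)
  by_contra! hdeg
  obtain ⟨M₀, hM₀, -⟩ := hext.exists_isPerfectMatching
  have hB : k ≤ B.ncard := by
    have h₁ := hM₀.ncard_le_ncard hbip
    have h₂ := Set.ncard_add_ncard_compl A
    rw [hAB.compl_eq, Nat.card_eq_fintype_card] at h₂
    have := hext.2.1
    omega
  obtain ⟨S, hNS, hSB, hSk⟩ :=
    Set.exists_subsuperset_card_eq (isBipartiteWith_neighborSet_subset hbip hv) hdeg hB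
  obtain ⟨f, hf, hfadj⟩ := hext.exists_injective_adj_ne hSk.le v
  have hfS : ∀ x y : S, (x : V) ≠ f y := fun x y h =>
    Set.disjoint_left.mp hbip.disjoint (hbip.symm.mem_of_mem_adj (hSB y.2) (hfadj y).1)
      (h ▸ hSB x.2)
  obtain ⟨M, hM, hFM⟩ := hext.2.2.2 _ (isMatchingSet_range_mk hf hfS fun x => (hfadj x).1)
    ((ncard_range_mk hfS).trans hSk)
  -- the partner `w` of `v` lies in `S`, but `w` is matched to `f w ≠ v`
  obtain ⟨w, hvw⟩ := (hM.1 (hM.2 v)).exists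
  have hwS : w ∈ S := hNS (M.adj_sub hvw)
  exact (hfadj ⟨w, hwS⟩).2
    (hM.1.eq_of_adj_left (M.mem_edgeSet.mp (hFM ⟨⟨w, hwS⟩, rfl⟩)) hvw.symm)

lemma exists_adj_notMem_coverSet (hext : KExtendable G k) {A B : Set V} (hAB : IsCompl A B)
    (hbip : G.IsBipartiteWith A B) {F : Set (Sym2 V)} (hF : F ⊆ G.edgeSet) (hFk : F.ncard < k)
    (v y : V) : ∃ x, G.Adj v x ∧ x ∉ coverSet F ∧ x ≠ y := by
  have hZ : (G.neighborSet v ∩ coverSet F ∪ {y}).ncard < (G.neighborSet v).ncard :=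
    calc (G.neighborSet v ∩ coverSet F ∪ {y}).ncard
        ≤ (G.neighborSet v ∩ coverSet F).ncard + 1 := by
          simpa using Set.ncard_union_le (G.neighborSet v ∩ coverSet F) {y}
      _ ≤ F.ncard + 1 := by grw [ncard_neighborSet_inter_coverSet_le hbip v hF]
      _ ≤ k := hFk
      _ < degN G v := hext.lt_degN hAB hbip v
  obtain ⟨x, hx, hxZ⟩ := Set.exists_mem_notMem_of_ncard_lt_ncard hZ
  exact ⟨x, hx, fun h => hxZ (Or.inl ⟨hx, h⟩), fun h => hxZ (Or.inr h)⟩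

lemma exists_isPerfectMatching_deleteEdges (hext : KExtendable G k) {s F : Set (Sym2 V)}
    (hF : IsMatchingSet (G.deleteEdges s) F) (hFk : F.ncard = k)
    (hs : ∀ e ∈ s, ∃ u ∈ e, u ∈ coverSet F) :
    ∃ M : (G.deleteEdges s).Subgraph, M.IsPerfectMatching ∧ F ⊆ M.edgeSet := by
  have hFG : F ⊆ G.edgeSet \ s := edgeSet_deleteEdges s ▸ hF.1
  obtain ⟨M, hM, hFM⟩ := hext.2.2.2 F ⟨hFG.trans Set.sdiff_subset, hF.2⟩ hFk
  have hsM : ∀ e ∈ s, e ∉ M.edgeSet := by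
    rintro e he heM
    obtain ⟨u, hue, f, hf, huf⟩ := hs e he
    exact (hFG hf).2 (hM.1.eq_of_mem_edgeSet (hFM hf) heM huf hue ▸ he)
  obtain ⟨M', hM', hM'M⟩ := hM.exists_deleteEdges hsM
  exact ⟨M', hM', hM'M ▸ hFM⟩

lemma exists_adj_meeting_deleted (hext : KExtendable G k) {A B : Set V} (hAB : IsCompl A B)
    (hbip : G.IsBipartiteWith A B) {a a' b b' : V} (haa' : a ≠ a') (hbb' : b ≠ b')
    (hadj : G.Adj a b') {F : Set (Sym2 V)} (hF : F ⊆ G.edgeSet) (hFk : F.ncard < k) :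
    ∃ p q, (G.deleteEdges {s(a, b), s(a', b')}).Adj p q ∧ p ∉ coverSet F ∧ q ∉ coverSet F ∧
      ∀ e ∈ ({s(a, b), s(a', b')} : Set (Sym2 V)), ∃ u ∈ e, u ∈ coverSet (insert s(p, q) F) := by
  suffices ∃ p q, G.Adj p q ∧ p ∉ coverSet F ∧ q ∉ coverSet F ∧
      s(p, q) ≠ s(a, b) ∧ s(p, q) ≠ s(a', b') ∧
      (∃ u ∈ s(a, b), u ∈ s(p, q) ∨ u ∈ coverSet F) ∧
      (∃ u ∈ s(a', b'), u ∈ s(p, q) ∨ u ∈ coverSet F) by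
    obtain ⟨p, q, hpq, hp, hq, hne₁, hne₂, hmeet₁, hmeet₂⟩ := this
    refine ⟨p, q, deleteEdges_adj.mpr ⟨hpq, by rintro (h | h); exacts [hne₁ h, hne₂ h]⟩, hp, hq, ?_⟩
    rintro e (rfl | rfl) <;> simpa only [mem_coverSet_insert]
  have ne_of_meet : ∀ {p q : V} {e : Sym2 V}, p ∉ coverSet F → q ∉ coverSet F →
      (∃ u ∈ e, u ∈ coverSet F) → s(p, q) ≠ e := by
    rintro p q e hp hq ⟨u, hu, huF⟩ rfl
    rcases Sym2.mem_iff.mp hu with rfl | rfl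
    exacts [hp huF, hq huF]
  by_cases h₁ : ∃ u ∈ s(a, b), u ∈ coverSet F <;>
    by_cases h₂ : ∃ u ∈ s(a', b'), u ∈ coverSet F
  · obtain ⟨v, hv⟩ := exists_notMem_coverSet (F := F) (by have := hext.2.1; omega)
    obtain ⟨x, hvx, hx, -⟩ := hext.exists_adj_notMem_coverSet hAB hbip hF hFk v v
    exact ⟨v, x, hvx, hv, hx, ne_of_meet hv hx h₁, ne_of_meet hv hx h₂,
      h₁.imp fun _ => And.imp_right Or.inr, h₂.imp fun _ => And.imp_right Or.inr⟩
  · push Not at h₂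
    obtain ⟨x, hb'x, hx, hxa'⟩ := hext.exists_adj_notMem_coverSet hAB hbip hF hFk b' a'
    have hb' := h₂ b' (Sym2.mem_mk_right a' b')
    exact ⟨b', x, hb'x, hb', hx, ne_of_meet hb' hx h₁,
      fun h => hxa' (Sym2.congr_right.mp (h.trans Sym2.eq_swap)),
      h₁.imp fun _ => And.imp_right Or.inr,
      ⟨b', Sym2.mem_mk_right _ _, Or.inl (Sym2.mem_mk_left _ _)⟩⟩
  · push Not at h₁
    obtain ⟨x, hax, hx, hxb⟩ := hext.exists_adj_notMem_coverSet hAB hbip hF hFk a b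
    have ha := h₁ a (Sym2.mem_mk_left a b)
    exact ⟨a, x, hax, ha, hx, fun h => hxb (Sym2.congr_right.mp h), ne_of_meet ha hx h₂,
      ⟨a, Sym2.mem_mk_left _ _, Or.inl (Sym2.mem_mk_left _ _)⟩,
      h₂.imp fun _ => And.imp_right Or.inr⟩
  · push Not at h₁ h₂
    exact ⟨a, b', hadj, h₁ a (Sym2.mem_mk_left a b), h₂ b' (Sym2.mem_mk_right a' b'),
      fun h => hbb' (Sym2.congr_right.mp h).symm, fun h => haa' (Sym2.congr_left.mp h),
      ⟨a, Sym2.mem_mk_left _ _, Or.inl (Sym2.mem_mk_left _ _)⟩,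
      ⟨b', Sym2.mem_mk_right _ _, Or.inl (Sym2.mem_mk_right _ _)⟩⟩

end KExtendable

theorem stmt18_general {V : Type*} [Fintype V] (G : SimpleGraph V) (k : ℕ) (hk : 1 ≤ k)
    (A B : Set V) (hpart : ∀ v, v ∈ A ↔ v ∉ B)
    (hbip : ∀ u v, G.Adj u v → (u ∈ A ∧ v ∈ B) ∨ (u ∈ B ∧ v ∈ A))
    (hext : KExtendable G k)
    (a a' b b' : V)
    (haa' : a ≠ a') (hbb' : b ≠ b')
    (hadj : G.Adj a b') :
    (∃ F : Set (Sym2 V),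
        IsMatchingSet (G.deleteEdges {s(a, b), s(a', b')}) F ∧ F.ncard = k - 1) ∧
      ∀ F : Set (Sym2 V),
        IsMatchingSet (G.deleteEdges {s(a, b), s(a', b')}) F → F.ncard = k - 1 →
          ∃ M : (G.deleteEdges {s(a, b), s(a', b')}).Subgraph,
            M.IsPerfectMatching ∧ F ⊆ M.edgeSet := by
  have hAB : IsCompl A B := (Set.ext hpart : A = Bᶜ) ▸ isCompl_compl.symm
  have hbip' : G.IsBipartiteWith A B := ⟨hAB.disjoint, hbip⟩
  refine ⟨hext.exists_isMatchingSet_deleteEdges ?_, fun F hF hFk => ?_⟩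
  · have := Set.ncard_insert_le s(a, b) {s(a', b')}
    rw [Set.ncard_singleton] at this
    omega
  have hFG : F ⊆ G.edgeSet := hF.1.trans (edgeSet_mono (deleteEdges_le _))
  obtain ⟨p, q, hpq, hp, hq, hmeet⟩ :=
    hext.exists_adj_meeting_deleted hAB hbip' haa' hbb' hadj hFG (by omega)
  obtain ⟨M, hM, hFM⟩ := hext.exists_isPerfectMatching_deleteEdges (hF.insert_mk hpq hp hq)
    (by rw [ncard_insert_mk (Set.toFinite F) hp]; omega) hmeet
  exact ⟨M, hM, (Set.subset_insert _ F).trans hFM⟩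

/-- Deleting two nonadjacent edges `ab`, `a'b'` of a bipartite `k`-extendable graph, where
`a` is adjacent to `b'`, yields a `(k-1)`-extendable graph (in the sense that it has a
matching of `k-1` edges and every such matching extends to a perfect matching). -/
theorem stmt18 {V : Type*} [Fintype V] (G : SimpleGraph V) (k : ℕ) (hk : 1 ≤ k)
    (A B : Set V) (hpart : ∀ v, v ∈ A ↔ v ∉ B)
    (hbip : ∀ u v, G.Adj u v → (u ∈ A ∧ v ∈ B) ∨ (u ∈ B ∧ v ∈ A))
    (hext : KExtendable G k)
    (a a' b b' : V) (haA : a ∈ A) (ha'A : a' ∈ A) (hbB : b ∈ B) (hb'B : b' ∈ B)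
    (hab : G.Adj a b) (ha'b' : G.Adj a' b')
    (haa' : a ≠ a') (hbb' : b ≠ b') (hab' : a ≠ b') (ha'b : a' ≠ b)
    (hadj : G.Adj a b') :
    (∃ F : Set (Sym2 V),
        IsMatchingSet (G.deleteEdges {s(a, b), s(a', b')}) F ∧ F.ncard = k - 1) ∧
      ∀ F : Set (Sym2 V),
        IsMatchingSet (G.deleteEdges {s(a, b), s(a', b')}) F → F.ncard = k - 1 →
          ∃ M : (G.deleteEdges {s(a, b), s(a', b')}).Subgraph,
            M.IsPerfectMatching ∧ F ⊆ M.edgeSet :=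
  stmt18_general G k hk A B hpart hbip hext a a' b b' haa' hbb' hadj
end
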